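/- arXiv:0711.1143 — 3 statements merged into one kernel-verified Lean document; each statement's English description precedes it below -/
import Mathlib

section
/- Strict monotonicity of the utility functional: if W, Z ∈ L^∞ satisfy W ≥ Z a.s. and P(W > Z) > 0, then U(W) > U(Z). -/
/-!
Suppose `U(W) ≤ U(Z)`. By concavity of `U` the same holds for `V = Z + k (W - Z)`, `k ≥ 1`, so
for every allocation `Y` of `Z`, putting the extra `k (W - Z)` into the last period gains at most
`U(Z) - E[∑ u_t(Ỹ_t)]`, uniformly in `k`. On the event `{W - Z ≥ δ}`, of positive probability
`p`, this gain approaches `sup u_T - u_T(Ỹ_T)` as `k → ∞`. Hence `u_T` is bounded above, and for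
a near-optimal `Y` the last-period consumption `Ỹ_T` exceeds `C - w` (where `Z ≤ C`) on more than
half of that event. There the other periods receive less than `w` in total, so
`∑ u_t(Ỹ_t) ≤ φ(w) - u_T(0) + sup u_T`, where `φ(w)` is the utility of the constant wealth `w`;
elsewhere the sum is at most `φ(C)`. Since `φ` is concave and not constant, it is unbounded below,
and a very negative `w` pushes the value of `Y` far below `U(Z)`.
-/

open MeasureTheory Finset Real

noncomputable section

/-- `A(W)`: the set of admissible intertemporal allocations of the risk `W`:
adapted processes `(Y_t)_{t∈𝕋}` with each `Y_t` essentially bounded and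
`∑_{t∈𝕋} Y_t/B_t = W` a.s. -/
def IsAlloc {Ω : Type*} [mΩ : MeasurableSpace Ω] (μ : Measure Ω) (T : ℕ)
    (ℱ : ℕ → MeasurableSpace Ω) (B : ℕ → Ω → ℝ) (W : Ω → ℝ) (Y : ℕ → Ω → ℝ) : Prop :=
  (∀ t ∈ Finset.Icc 1 T, Measurable[ℱ t] (Y t) ∧ ∃ C : ℝ, ∀ᵐ ω ∂μ, |Y t ω| ≤ C) ∧
  ∀ᵐ ω ∂μ, ∑ t ∈ Finset.Icc 1 T, Y t ω / B t ω = W ω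

/-- The integrated expected utility `∑_{t∈𝕋} E[u_t(Ỹ_t)]` of an allocation. -/
def allocVal {Ω : Type*} [mΩ : MeasurableSpace Ω] (μ : Measure Ω) (T : ℕ)
    (u : ℕ → ℝ → ℝ) (B : ℕ → Ω → ℝ) (Y : ℕ → Ω → ℝ) : ℝ :=
  ∑ t ∈ Finset.Icc 1 T, ∫ ω, u t (Y t ω / B t ω) ∂μ

/-- The utility functional `U(W) = sup { ∑_t E[u_t(Ỹ_t)] : Y ∈ A(W) }`. -/
def Util {Ω : Type*} [mΩ : MeasurableSpace Ω] (μ : Measure Ω) (T : ℕ)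
    (ℱ : ℕ → MeasurableSpace Ω) (u : ℕ → ℝ → ℝ) (B : ℕ → Ω → ℝ) (W : Ω → ℝ) : ℝ :=
  sSup {s : ℝ | ∃ Y, IsAlloc μ T ℱ B W Y ∧ s = allocVal μ T u B Y}

open Filter Topology

section RealLemmas

lemma exists_le_of_midpoint_concave {f : ℝ → ℝ}
    (hf : ∀ a b, f a + f b ≤ 2 * f ((a + b) / 2)) {a b : ℝ} (hab : f a < f b) (R : ℝ) :
    ∃ w, f w ≤ R := by
  have key : ∀ k : ℕ, f (b + 2 ^ k * (a - b)) ≤ f b - 2 ^ k * (f b - f a) := by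
    intro k
    induction k with
    | zero => simp
    | succ k ih =>
      have hmid := hf (b + 2 ^ (k + 1) * (a - b)) b
      rw [show (b + 2 ^ (k + 1) * (a - b) + b) / 2 = b + 2 ^ k * (a - b) by ring] at hmid
      rw [pow_succ] at hmid ⊢
      linarith
  obtain ⟨k, hk⟩ := pow_unbounded_of_one_lt ((f b - R) / (f b - f a)) one_lt_two
  rw [div_lt_iff₀ (sub_pos.2 hab)] at hk
  exact ⟨_, (key k).trans (by linarith)⟩

lemma sum_le_sum_iSup_sub_inf' {ι : Type*} {s : Finset ι} (hs : s.Nonempty) {f : ι → ℝ → ℝ}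
    (hmono : ∀ i ∈ s, Monotone (f i)) (hbdd : ∀ i ∈ s, BddAbove (Set.range (f i)))
    {x : ι → ℝ} (hx : ∑ i ∈ s, x i ≤ 0) :
    ∑ i ∈ s, f i (x i) ≤ ∑ i ∈ s, (⨆ y, f i y) - s.inf' hs (fun i => (⨆ y, f i y) - f i 0) := by
  classical
  obtain ⟨i₀, hi₀, hx₀⟩ : ∃ i ∈ s, x i ≤ 0 :=
    Finset.exists_le_of_sum_le hs (by simpa using hx)
  have hle : ∀ i ∈ s.erase i₀, f i (x i) ≤ ⨆ y, f i y := fun i hi =>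
    le_ciSup (hbdd i (Finset.mem_of_mem_erase hi)) _
  rw [← Finset.add_sum_erase _ _ hi₀, ← Finset.add_sum_erase _ _ hi₀]
  have hrest := Finset.sum_le_sum hle
  have hfirst := hmono i₀ hi₀ hx₀
  have hgap := Finset.inf'_le (fun i => (⨆ y, f i y) - f i 0) hi₀
  linarith

end RealLemmas

section MeasureLemmas

variable {Ω : Type*} [MeasurableSpace Ω] {μ : Measure Ω}

lemma exists_pos_measure_le_of_pos_measure_pos {f : Ω → ℝ} (hf : 0 < μ {ω | 0 < f ω}) :
    ∃ δ > 0, 0 < μ {ω | δ ≤ f ω} := by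
  by_contra! h
  have hcover : {ω | 0 < f ω} ⊆ ⋃ n : ℕ, {ω | 1 / ((n : ℝ) + 1) ≤ f ω} := fun ω hω =>
    let ⟨n, hn⟩ := exists_nat_one_div_lt (show 0 < f ω from hω)
    Set.mem_iUnion.2 ⟨n, hn.le⟩
  have hnull := measure_mono_null hcover (measure_iUnion_null fun n =>
    nonpos_iff_eq_zero.mp (h _ Nat.one_div_pos_of_nat))
  exact hf.ne' hnull

lemma integrable_comp_of_ae_abs_le [IsFiniteMeasure μ] {f : Ω → ℝ} (hf : Measurable f) {C : ℝ}
    (hC : ∀ᵐ ω ∂μ, |f ω| ≤ C) {v : ℝ → ℝ} (hv : Continuous v) :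
    Integrable (fun ω => v (f ω)) μ := by
  obtain ⟨M, hM⟩ := (isCompact_Icc (a := -C) (b := C)).exists_bound_of_continuousOn hv.continuousOn
  refine Integrable.of_bound (hv.measurable.comp hf).aestronglyMeasurable M ?_
  filter_upwards [hC] with ω hω
  exact hM _ (abs_le.mp hω)

lemma measureReal_mul_le_integral [IsFiniteMeasure μ] {F : Ω → ℝ} (hF : Integrable F μ)
    {E : Set Ω} (hE : MeasurableSet E) {b : ℝ} (h0 : ∀ᵐ ω ∂μ, 0 ≤ F ω)
    (hb : ∀ᵐ ω ∂μ, ω ∈ E → b ≤ F ω) :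
    μ.real E * b ≤ ∫ ω, F ω ∂μ := by
  rw [← smul_eq_mul, ← integral_indicator_const b hE]
  refine integral_mono_ae ((integrable_const b).indicator hE) hF ?_
  filter_upwards [h0, hb] with ω h0 hb
  by_cases hω : ω ∈ E
  · simpa [hω] using hb hω
  · simpa [hω] using h0

lemma integral_le_add_measureReal_mul [IsProbabilityMeasure μ] {F : Ω → ℝ}
    (hF : Integrable F μ) {E : Set Ω} (hE : MeasurableSet E) {a b : ℝ}
    (ha : ∀ᵐ ω ∂μ, F ω ≤ a) (hb : ∀ᵐ ω ∂μ, ω ∈ E → F ω ≤ b) :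
    ∫ ω, F ω ∂μ ≤ a + μ.real E * (b - a) := by
  have hind := (integrable_const (b - a)).indicator (μ := μ) hE
  calc ∫ ω, F ω ∂μ ≤ ∫ ω, (a + E.indicator (fun _ => b - a) ω) ∂μ := by
        refine integral_mono_ae hF ((integrable_const a).add hind) ?_
        filter_upwards [ha, hb] with ω ha hb
        by_cases hω : ω ∈ E
        · simpa [hω] using hb hω
        · simpa [hω] using ha
    _ = a + μ.real E * (b - a) := by
        rw [integral_add (integrable_const a) hind, integral_indicator_const _ hE]
        simp

section Gain

variable [IsFiniteMeasure μ] {v : ℝ → ℝ} {X D : Ω → ℝ} {CX CD δ K : ℝ}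

lemma measureReal_mul_le_of_integral_gain_le (hv : Monotone v) (hvc : Continuous v)
    (hX : Measurable X) (hXC : ∀ᵐ ω ∂μ, |X ω| ≤ CX) (hD : Measurable D)
    (hDC : ∀ᵐ ω ∂μ, |D ω| ≤ CD) (hD0 : ∀ᵐ ω ∂μ, 0 ≤ D ω) (hδ : 0 < δ)
    (hK : ∀ k : ℝ, 1 ≤ k → ∫ ω, (v (X ω + k * D ω) - v (X ω)) ∂μ ≤ K) (m x : ℝ) :
    μ.real ({ω | δ ≤ D ω} ∩ {ω | X ω ≤ m}) * (v x - v m) ≤ K := by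
  set k := max 1 ((x + CX) / δ)
  have hk : 0 ≤ k := zero_le_one.trans (le_max_left _ _)
  have hxk : x + CX ≤ k * δ := (div_le_iff₀ hδ).1 (le_max_right _ _)
  have hint : Integrable (fun ω => v (X ω + k * D ω)) μ := by
    refine integrable_comp_of_ae_abs_le (hX.add (hD.const_mul k)) (C := CX + k * CD) ?_ hvc
    filter_upwards [hXC, hDC] with ω h₁ h₂
    calc |X ω + k * D ω| ≤ |X ω| + k * |D ω| := by
          simpa only [abs_mul, abs_of_nonneg hk] using abs_add_le (X ω) (k * D ω)
      _ ≤ CX + k * CD := by gcongr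
  refine (measureReal_mul_le_integral (hint.sub (integrable_comp_of_ae_abs_le hX hXC hvc))
    ((measurableSet_le measurable_const hD).inter (measurableSet_le hX measurable_const))
    ?_ ?_).trans (hK k (le_max_left _ _))
  · filter_upwards [hD0] with ω hω
    exact sub_nonneg.2 (hv (le_add_of_nonneg_right (mul_nonneg hk hω)))
  · filter_upwards [hXC] with ω hXω ⟨hδω, hmω⟩
    have hx : x ≤ X ω + k * D ω := by
      linarith [neg_abs_le (X ω), mul_le_mul_of_nonneg_left (show δ ≤ D ω from hδω) hk]
    show v x - v m ≤ v (X ω + k * D ω) - v (X ω)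
    linarith [hv hx, hv (show X ω ≤ m from hmω)]

lemma bddAbove_range_of_integral_gain_le (hv : Monotone v) (hvc : Continuous v)
    (hX : Measurable X) (hXC : ∀ᵐ ω ∂μ, |X ω| ≤ CX) (hD : Measurable D)
    (hDC : ∀ᵐ ω ∂μ, |D ω| ≤ CD) (hD0 : ∀ᵐ ω ∂μ, 0 ≤ D ω) (hδ : 0 < δ)
    (hA : 0 < μ {ω | δ ≤ D ω})
    (hK : ∀ k : ℝ, 1 ≤ k → ∫ ω, (v (X ω + k * D ω) - v (X ω)) ∂μ ≤ K) :
    BddAbove (Set.range v) := by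
  have hp : 0 < μ.real {ω | δ ≤ D ω} := ENNReal.toReal_pos hA.ne' (measure_ne_top _ _)
  have hconull : μ.real ({ω | δ ≤ D ω} ∩ {ω | X ω ≤ CX}) = μ.real {ω | δ ≤ D ω} := by
    have hnull : μ {ω | X ω ≤ CX}ᶜ = 0 := ae_iff.1 (hXC.mono fun ω h => (abs_le.1 h).2)
    rw [measureReal_def, measure_inter_conull hnull, measureReal_def]
  refine ⟨v CX + K / μ.real {ω | δ ≤ D ω}, ?_⟩
  rintro _ ⟨x, rfl⟩
  have h := measureReal_mul_le_of_integral_gain_le hv hvc hX hXC hD hDC hD0 hδ hK CX x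
  rw [hconull] at h
  rw [← sub_le_iff_le_add', le_div_iff₀ hp]
  linarith

lemma half_lt_measureReal_inter_of_integral_gain_le (hv : Monotone v) (hvc : Continuous v)
    (hX : Measurable X) (hXC : ∀ᵐ ω ∂μ, |X ω| ≤ CX) (hD : Measurable D)
    (hDC : ∀ᵐ ω ∂μ, |D ω| ≤ CD) (hD0 : ∀ᵐ ω ∂μ, 0 ≤ D ω) (hδ : 0 < δ)
    (hK : ∀ k : ℝ, 1 ≤ k → ∫ ω, (v (X ω + k * D ω) - v (X ω)) ∂μ ≤ K)
    (hbdd : BddAbove (Set.range v)) {m : ℝ}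
    (hKm : K < μ.real {ω | δ ≤ D ω} * ((⨆ x, v x) - v m) / 2) :
    μ.real {ω | δ ≤ D ω} / 2 < μ.real ({ω | δ ≤ D ω} ∩ {ω | m < X ω}) := by
  have h := measureReal_mul_le_of_integral_gain_le hv hvc hX hXC hD hDC hD0 hδ hK m
  have hsup : μ.real ({ω | δ ≤ D ω} ∩ {ω | X ω ≤ m}) * ((⨆ x, v x) - v m) ≤ K := by
    rw [mul_sub, Real.mul_iSup_of_nonneg measureReal_nonneg, sub_le_iff_le_add]
    exact ciSup_le fun x => by linarith [h x]
  have hsplit : μ.real ({ω | δ ≤ D ω} ∩ {ω | X ω ≤ m}) +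
      μ.real ({ω | δ ≤ D ω} ∩ {ω | m < X ω}) = μ.real {ω | δ ≤ D ω} := by
    rw [← measureReal_inter_add_sdiff (s := {ω | δ ≤ D ω})
      (measurableSet_lt (measurable_const (a := m)) hX), add_comm]
    congr 2
    ext ω
    simp [not_lt]
  have hle : μ.real ({ω | δ ≤ D ω} ∩ {ω | X ω ≤ m}) < μ.real {ω | δ ≤ D ω} / 2 :=
    lt_of_mul_lt_mul_right (by linarith) (sub_nonneg.2 (le_ciSup hbdd m))
  linarith

end Gain

end MeasureLemmas

structure IsBankAccount {Ω : Type*} (ℱ : ℕ → MeasurableSpace Ω) (T : ℕ) (B : ℕ → Ω → ℝ) :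
    Prop where
  measurable : ∀ t ∈ Icc 1 T, Measurable[ℱ t] (B t)
  one_le : ∀ t ∈ Icc 1 T, ∀ ω, 1 ≤ B t ω
  bddAbove : ∀ t ∈ Icc 1 T, ∃ C, ∀ ω, B t ω ≤ C

lemma IsBankAccount.ne_zero {Ω : Type*} {ℱ : ℕ → MeasurableSpace Ω} {T : ℕ} {B : ℕ → Ω → ℝ}
    (hB : IsBankAccount ℱ T B) {t : ℕ} (ht : t ∈ Icc 1 T) (ω : Ω) : B t ω ≠ 0 :=
  (zero_lt_one.trans_le (hB.one_le t ht ω)).ne'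

lemma isBankAccount_of_rate {Ω : Type*} {ℱ : ℕ → MeasurableSpace Ω} (hℱ : Monotone ℱ) {T : ℕ}
    {r : ℕ → Ω → ℝ} (hr_meas : ∀ t ∈ Icc 1 T, Measurable[ℱ (t - 1)] (r t))
    (hr_nonneg : ∀ t ∈ Icc 1 T, ∀ ω, 0 ≤ r t ω) (hr_bdd : ∀ t ∈ Icc 1 T, ∃ C, ∀ ω, r t ω ≤ C)
    {B : ℕ → Ω → ℝ} (hB : ∀ t ω, B t ω = ∏ k ∈ Icc 1 t, (1 + r k ω)) :
    IsBankAccount ℱ T B := by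
  have hsub : ∀ {t k}, t ∈ Icc 1 T → k ∈ Icc 1 t → k ∈ Icc 1 T ∧ k - 1 ≤ t := by
    intro t k ht hk
    simp only [Finset.mem_Icc] at ht hk ⊢
    omega
  refine ⟨fun t ht => ?_, fun t ht ω => ?_, fun t ht => ?_⟩
  · rw [show B t = fun ω => ∏ k ∈ Icc 1 t, (1 + r k ω) from funext (hB t)]
    refine Finset.measurable_prod _ fun k hk => measurable_const.add ?_
    exact (hr_meas k (hsub ht hk).1).mono (hℱ (hsub ht hk).2) le_rfl
  · rw [hB]
    exact Finset.one_le_prod fun k hk => by linarith [hr_nonneg k (hsub ht hk).1 ω]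
  · choose! C hC using hr_bdd
    refine ⟨∏ k ∈ Icc 1 t, (1 + C k), fun ω => ?_⟩
    rw [hB]
    refine Finset.prod_le_prod (fun k hk => ?_) (fun k hk => ?_)
    · linarith [hr_nonneg k (hsub ht hk).1 ω]
    · linarith [hC k (hsub ht hk).1 ω]

section Allocations

variable {Ω : Type*} [mΩ : MeasurableSpace Ω] {μ : Measure Ω} {T : ℕ}
  {ℱ : ℕ → MeasurableSpace Ω} {B : ℕ → Ω → ℝ} {u : ℕ → ℝ → ℝ} {V V₁ V₂ W Z : Ω → ℝ}
  {Y Y₁ Y₂ : ℕ → Ω → ℝ}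

namespace IsAlloc

lemma congr (hY : IsAlloc μ T ℱ B V Y) (h : V =ᵐ[μ] V₁) : IsAlloc μ T ℱ B V₁ Y :=
  ⟨hY.1, by filter_upwards [hY.2, h] with ω h₁ h₂ using h₁.trans h₂⟩

lemma measurable_div (hℱ : ∀ t, ℱ t ≤ mΩ) (hB : IsBankAccount ℱ T B)
    (hY : IsAlloc μ T ℱ B V Y) {t : ℕ} (ht : t ∈ Icc 1 T) :
    Measurable fun ω => Y t ω / B t ω :=
  ((hY.1 t ht).1.mono (hℱ t) le_rfl).div ((hB.measurable t ht).mono (hℱ t) le_rfl)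

lemma exists_ae_abs_div_le (hB : IsBankAccount ℱ T B) (hY : IsAlloc μ T ℱ B V Y) {t : ℕ}
    (ht : t ∈ Icc 1 T) : ∃ C, ∀ᵐ ω ∂μ, |Y t ω / B t ω| ≤ C := by
  obtain ⟨C, hC⟩ := (hY.1 t ht).2
  refine ⟨C, ?_⟩
  filter_upwards [hC] with ω hω
  have h1 := hB.one_le t ht ω
  rw [abs_div, abs_of_pos (zero_lt_one.trans_le h1)]
  exact (div_le_self (abs_nonneg _) h1).trans hω

lemma integrable_comp [IsFiniteMeasure μ] (hℱ : ∀ t, ℱ t ≤ mΩ) (hB : IsBankAccount ℱ T B)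
    (hY : IsAlloc μ T ℱ B V Y) {t : ℕ} (ht : t ∈ Icc 1 T) {v : ℝ → ℝ} (hv : Continuous v) :
    Integrable (fun ω => v (Y t ω / B t ω)) μ :=
  let ⟨_, hC⟩ := hY.exists_ae_abs_div_le hB ht
  integrable_comp_of_ae_abs_le (hY.measurable_div hℱ hB ht) hC hv

lemma linearCombination (hY₁ : IsAlloc μ T ℱ B V₁ Y₁) (hY₂ : IsAlloc μ T ℱ B V₂ Y₂) (a b : ℝ) :
    IsAlloc μ T ℱ B (fun ω => a * V₁ ω + b * V₂ ω) (fun t ω => a * Y₁ t ω + b * Y₂ t ω) := by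
  refine ⟨fun t ht => ⟨((hY₁.1 t ht).1.const_mul a).add ((hY₂.1 t ht).1.const_mul b), ?_⟩, ?_⟩
  · obtain ⟨C₁, hC₁⟩ := (hY₁.1 t ht).2
    obtain ⟨C₂, hC₂⟩ := (hY₂.1 t ht).2
    refine ⟨|a| * C₁ + |b| * C₂, ?_⟩
    filter_upwards [hC₁, hC₂] with ω h₁ h₂
    calc |a * Y₁ t ω + b * Y₂ t ω| ≤ |a| * |Y₁ t ω| + |b| * |Y₂ t ω| := by
          rw [← abs_mul, ← abs_mul]
          exact abs_add_le _ _
      _ ≤ |a| * C₁ + |b| * C₂ := by gcongr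
  · filter_upwards [hY₁.2, hY₂.2] with ω h₁ h₂
    simp only [add_div, mul_div_assoc, Finset.sum_add_distrib, ← Finset.mul_sum, h₁, h₂]

lemma update_last (hT : 1 ≤ T) (hB : IsBankAccount ℱ T B) (hY : IsAlloc μ T ℱ B V Y)
    {G : Ω → ℝ} (hG : Measurable[ℱ T] G) {C : ℝ} (hC : ∀ᵐ ω ∂μ, |G ω| ≤ C) :
    IsAlloc μ T ℱ B (fun ω => V ω + G ω)
      (Function.update Y T fun ω => Y T ω + B T ω * G ω) := by
  have hT' : T ∈ Icc 1 T := Finset.right_mem_Icc.2 hT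
  refine ⟨fun t ht => ?_, ?_⟩
  · rcases eq_or_ne t T with rfl | hne
    · rw [Function.update_self]
      refine ⟨(hY.1 t ht).1.add ((hB.measurable t ht).mul hG), ?_⟩
      obtain ⟨C₁, hC₁⟩ := (hY.1 t ht).2
      obtain ⟨CB, hCB⟩ := hB.bddAbove t ht
      refine ⟨C₁ + CB * C, ?_⟩
      filter_upwards [hC₁, hC] with ω h₁ h₂
      have hB0 : 0 ≤ B t ω := zero_le_one.trans (hB.one_le t ht ω)
      have := mul_le_mul (hCB ω) h₂ (abs_nonneg _) (hB0.trans (hCB ω))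
      calc |Y t ω + B t ω * G ω| ≤ |Y t ω| + B t ω * |G ω| := by
            rw [← abs_of_nonneg hB0, ← abs_mul, abs_of_nonneg hB0]
            exact abs_add_le _ _
        _ ≤ C₁ + CB * C := by linarith
    · rw [Function.update_of_ne hne]
      exact hY.1 t ht
  · filter_upwards [hY.2] with ω hω
    have hdiv : ∀ t ∈ Icc 1 T, Function.update Y T (fun ω => Y T ω + B T ω * G ω) t ω / B t ω
        = Y t ω / B t ω + if t = T then G ω else 0 := by
      intro t ht
      rcases eq_or_ne t T with rfl | hne
      · simp [add_div, mul_div_cancel_left₀ _ (hB.ne_zero ht ω)]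
      · simp [hne]
    rw [Finset.sum_congr rfl hdiv, Finset.sum_add_distrib, Finset.sum_ite_eq', if_pos hT', hω]

end IsAlloc

lemma isAlloc_mul_const (hB : IsBankAccount ℱ T B) (y : ℕ → ℝ) :
    IsAlloc μ T ℱ B (fun _ => ∑ t ∈ Icc 1 T, y t) (fun t ω => B t ω * y t) := by
  refine ⟨fun t ht => ⟨(hB.measurable t ht).mul_const _, ?_⟩, ?_⟩
  · obtain ⟨CB, hCB⟩ := hB.bddAbove t ht
    refine ⟨CB * |y t|, Eventually.of_forall fun ω => ?_⟩
    rw [abs_mul, abs_of_nonneg (zero_le_one.trans (hB.one_le t ht ω))]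
    exact mul_le_mul_of_nonneg_right (hCB ω) (abs_nonneg _)
  · exact Eventually.of_forall fun ω =>
      Finset.sum_congr rfl fun t ht => mul_div_cancel_left₀ _ (hB.ne_zero ht ω)

lemma allocVal_mul_const [IsProbabilityMeasure μ] (hB : IsBankAccount ℱ T B) (y : ℕ → ℝ) :
    allocVal μ T u B (fun t ω => B t ω * y t) = ∑ t ∈ Icc 1 T, u t (y t) :=
  Finset.sum_congr rfl fun t ht => by simp [mul_div_cancel_left₀ _ (hB.ne_zero ht _)]

lemma allocVal_eq_integral_sum [IsFiniteMeasure μ] (hℱ : ∀ t, ℱ t ≤ mΩ)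
    (hB : IsBankAccount ℱ T B) (hcont : ∀ t ∈ Icc 1 T, Continuous (u t))
    (hY : IsAlloc μ T ℱ B V Y) :
    allocVal μ T u B Y = ∫ ω, ∑ t ∈ Icc 1 T, u t (Y t ω / B t ω) ∂μ :=
  (integral_finsetSum _ fun t ht => hY.integrable_comp hℱ hB ht (hcont t ht)).symm

lemma allocVal_update_last [IsFiniteMeasure μ] (hT : 1 ≤ T) (hℱ : ∀ t, ℱ t ≤ mΩ)
    (hB : IsBankAccount ℱ T B) (hcont : ∀ t ∈ Icc 1 T, Continuous (u t))
    (hY : IsAlloc μ T ℱ B V Y) {G : Ω → ℝ} (hG : Measurable[ℱ T] G) {C : ℝ}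
    (hC : ∀ᵐ ω ∂μ, |G ω| ≤ C) :
    allocVal μ T u B (Function.update Y T fun ω => Y T ω + B T ω * G ω) =
      allocVal μ T u B Y + ∫ ω, (u T (Y T ω / B T ω + G ω) - u T (Y T ω / B T ω)) ∂μ := by
  have hT' : T ∈ Icc 1 T := Finset.right_mem_Icc.2 hT
  have hdiv : ∀ ω, (Y T ω + B T ω * G ω) / B T ω = Y T ω / B T ω + G ω := fun ω => by
    rw [add_div, mul_div_cancel_left₀ _ (hB.ne_zero hT' ω)]
  have hint := (hY.update_last hT hB hG hC).integrable_comp hℱ hB hT' (hcont T hT')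
  simp only [Function.update_self, hdiv] at hint
  unfold allocVal
  rw [← Finset.add_sum_erase _ _ hT', ← Finset.add_sum_erase _ _ hT', Function.update_self,
    integral_sub hint (hY.integrable_comp hℱ hB hT' (hcont T hT'))]
  simp only [hdiv]
  have herase : ∀ t ∈ (Icc 1 T).erase T,
      ∫ ω, u t (Function.update Y T (fun ω => Y T ω + B T ω * G ω) t ω / B t ω) ∂μ
        = ∫ ω, u t (Y t ω / B t ω) ∂μ := fun t ht => by
    rw [Function.update_of_ne (Finset.ne_of_mem_erase ht)]
  rw [Finset.sum_congr rfl herase]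
  ring

lemma allocVal_linearCombination_ge [IsFiniteMeasure μ] (hℱ : ∀ t, ℱ t ≤ mΩ)
    (hB : IsBankAccount ℱ T B) (hcont : ∀ t ∈ Icc 1 T, Continuous (u t))
    (hconc : ∀ t ∈ Icc 1 T, ConcaveOn ℝ Set.univ (u t))
    (hY₁ : IsAlloc μ T ℱ B V₁ Y₁) (hY₂ : IsAlloc μ T ℱ B V₂ Y₂) {a b : ℝ} (ha : 0 ≤ a)
    (hb : 0 ≤ b) (hab : a + b = 1) :
    a * allocVal μ T u B Y₁ + b * allocVal μ T u B Y₂ ≤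
      allocVal μ T u B (fun t ω => a * Y₁ t ω + b * Y₂ t ω) := by
  unfold allocVal
  rw [Finset.mul_sum, Finset.mul_sum, ← Finset.sum_add_distrib]
  refine Finset.sum_le_sum fun t ht => ?_
  have hint₁ := hY₁.integrable_comp hℱ hB ht (hcont t ht)
  have hint₂ := hY₂.integrable_comp hℱ hB ht (hcont t ht)
  rw [← integral_const_mul, ← integral_const_mul,
    ← integral_add (hint₁.const_mul a) (hint₂.const_mul b)]
  refine integral_mono ((hint₁.const_mul a).add (hint₂.const_mul b))
    ((hY₁.linearCombination hY₂ a b).integrable_comp hℱ hB ht (hcont t ht)) fun ω => ?_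
  have := (hconc t ht).2 (Set.mem_univ (Y₁ t ω / B t ω))
    (Set.mem_univ (Y₂ t ω / B t ω)) ha hb hab
  simpa only [smul_eq_mul, add_div, mul_div_assoc] using this

def allocVals (μ : Measure Ω) (T : ℕ) (ℱ : ℕ → MeasurableSpace Ω) (u : ℕ → ℝ → ℝ)
    (B : ℕ → Ω → ℝ) (V : Ω → ℝ) : Set ℝ :=
  {s : ℝ | ∃ Y, IsAlloc μ T ℱ B V Y ∧ s = allocVal μ T u B Y}

lemma allocVal_le_util (hbdd : BddAbove (allocVals μ T ℱ u B V)) (hY : IsAlloc μ T ℱ B V Y) :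
    allocVal μ T u B Y ≤ Util μ T ℱ u B V :=
  le_csSup hbdd ⟨Y, hY, rfl⟩

lemma allocVals_nonempty (hT : 1 ≤ T) (hB : IsBankAccount ℱ T B) (hV : Measurable[ℱ T] V)
    {C : ℝ} (hC : ∀ᵐ ω ∂μ, |V ω| ≤ C) : (allocVals μ T ℱ u B V).Nonempty :=
  ⟨_, _, ((isAlloc_mul_const hB 0).update_last hT hB hV hC).congr (V₁ := V)
    (Eventually.of_forall fun ω => by simp), rfl⟩

lemma exists_allocVal_gt (hne : (allocVals μ T ℱ u B V).Nonempty) {ε : ℝ} (hε : 0 < ε) :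
    ∃ Y, IsAlloc μ T ℱ B V Y ∧ Util μ T ℱ u B V - ε < allocVal μ T u B Y := by
  obtain ⟨_, ⟨Y, hY, rfl⟩, h⟩ := exists_lt_of_lt_csSup hne (sub_lt_self _ hε)
  exact ⟨Y, hY, h⟩

lemma util_linearCombination_ge [IsFiniteMeasure μ] (hℱ : ∀ t, ℱ t ≤ mΩ)
    (hB : IsBankAccount ℱ T B) (hcont : ∀ t ∈ Icc 1 T, Continuous (u t))
    (hconc : ∀ t ∈ Icc 1 T, ConcaveOn ℝ Set.univ (u t))
    (hne₁ : (allocVals μ T ℱ u B V₁).Nonempty) (hne₂ : (allocVals μ T ℱ u B V₂).Nonempty)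
    {a b : ℝ} (hbdd : BddAbove (allocVals μ T ℱ u B fun ω => a * V₁ ω + b * V₂ ω))
    (ha : 0 ≤ a) (hb : 0 ≤ b) (hab : a + b = 1) :
    a * Util μ T ℱ u B V₁ + b * Util μ T ℱ u B V₂ ≤
      Util μ T ℱ u B fun ω => a * V₁ ω + b * V₂ ω := by
  refine le_of_forall_pos_le_add fun ε hε => ?_
  obtain ⟨Y₁, hY₁, h₁⟩ := exists_allocVal_gt hne₁ hε
  obtain ⟨Y₂, hY₂, h₂⟩ := exists_allocVal_gt hne₂ hε
  have hmix := allocVal_linearCombination_ge hℱ hB hcont hconc hY₁ hY₂ ha hb hab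
  have hle := allocVal_le_util hbdd (hY₁.linearCombination hY₂ a b)
  nlinarith [mul_le_mul_of_nonneg_left h₁.le ha, mul_le_mul_of_nonneg_left h₂.le hb]

lemma sum_le_util_const [IsProbabilityMeasure μ] (hT : 1 ≤ T) (hB : IsBankAccount ℱ T B)
    (hmono : ∀ t ∈ Icc 1 T, Monotone (u t)) {w : ℝ}
    (hbdd : BddAbove (allocVals μ T ℱ u B fun _ => w)) {y : ℕ → ℝ}
    (hy : ∑ t ∈ Icc 1 T, y t ≤ w) :
    ∑ t ∈ Icc 1 T, u t (y t) ≤ Util μ T ℱ u B fun _ => w := by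
  set y' : ℕ → ℝ := fun t => y t + if t = T then w - ∑ t ∈ Icc 1 T, y t else 0
  have hsum : ∑ t ∈ Icc 1 T, y' t = w := by
    simp [y', Finset.sum_add_distrib, Finset.sum_ite_eq', hT]
  have hY := (isAlloc_mul_const (μ := μ) (ℱ := ℱ) hB y').congr (Eventually.of_forall fun _ => hsum)
  calc ∑ t ∈ Icc 1 T, u t (y t) ≤ ∑ t ∈ Icc 1 T, u t (y' t) :=
        Finset.sum_le_sum fun t ht =>
          hmono t ht (le_add_of_nonneg_right (by split_ifs <;> linarith))
    _ = allocVal μ T u B (fun t ω => B t ω * y' t) := (allocVal_mul_const hB y').symm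
    _ ≤ _ := allocVal_le_util hbdd hY

lemma sum_le_util_const_sub_add_last [IsProbabilityMeasure μ] (hT : 1 ≤ T)
    (hB : IsBankAccount ℱ T B) (hmono : ∀ t ∈ Icc 1 T, Monotone (u t)) {w : ℝ}
    (hbdd : BddAbove (allocVals μ T ℱ u B fun _ => w)) {x : ℕ → ℝ}
    (hx : ∑ t ∈ Icc 1 T, x t - x T ≤ w) :
    ∑ t ∈ Icc 1 T, u t (x t) ≤ (Util μ T ℱ u B fun _ => w) - u T 0 + u T (x T) := by
  have hT' : T ∈ Icc 1 T := Finset.right_mem_Icc.2 hT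
  have hsum : ∑ t ∈ Icc 1 T, Function.update x T 0 t = ∑ t ∈ Icc 1 T, x t - x T := by
    rw [Finset.sum_update_of_mem hT', Finset.sum_eq_add_sum_sdiff_singleton_of_mem hT' x]
    ring
  have hval : ∑ t ∈ Icc 1 T, u t (Function.update x T 0 t) =
      u T 0 + (∑ t ∈ Icc 1 T, u t (x t) - u T (x T)) := by
    simp_rw [Function.apply_update u]
    rw [Finset.sum_update_of_mem hT',
      Finset.sum_eq_add_sum_sdiff_singleton_of_mem hT' fun t => u t (x t)]
    ring
  have h := sum_le_util_const hT hB hmono hbdd (hsum.trans_le hx)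
  linarith

lemma exists_util_const_lt [IsProbabilityMeasure μ] (hT : 1 ≤ T) (hℱ : ∀ t, ℱ t ≤ mΩ)
    (hB : IsBankAccount ℱ T B)
    (hcont : ∀ t ∈ Icc 1 T, Continuous (u t)) (hstrict : ∀ t ∈ Icc 1 T, StrictMono (u t))
    (hbdd : ∀ w : ℝ, BddAbove (allocVals μ T ℱ u B fun _ => w)) :
    ∃ a b, (Util μ T ℱ u B fun _ => a) < Util μ T ℱ u B fun _ => b := by
  by_contra! hconst
  have hmono : ∀ t ∈ Icc 1 T, Monotone (u t) := fun t ht => (hstrict t ht).monotone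
  set K := Util μ T ℱ u B fun _ => 0
  have hK : ∀ y : ℕ → ℝ, ∑ t ∈ Icc 1 T, u t (y t) ≤ K := fun y =>
    (sum_le_util_const hT hB hmono (hbdd _) le_rfl).trans (hconst _ _)
  have hbddu : ∀ t ∈ Icc 1 T, BddAbove (Set.range (u t)) := by
    refine fun t ht => ⟨u t 0 + (K - ∑ s ∈ Icc 1 T, u s 0), ?_⟩
    rintro _ ⟨x, rfl⟩
    have hsingle := Finset.single_le_sum (f := fun s => u s (max x 0) - u s 0)
      (fun s hs => sub_nonneg.2 (hmono s hs (le_max_right x 0))) ht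
    rw [Finset.sum_sub_distrib] at hsingle
    linarith [hK fun _ => max x 0, hmono t ht (le_max_left x 0)]
  have hne : (Icc 1 T).Nonempty := ⟨T, Finset.right_mem_Icc.2 hT⟩
  set η := (Icc 1 T).inf' hne fun t => (⨆ x, u t x) - u t 0
  have hη : 0 < η := (Finset.lt_inf'_iff hne).2 fun t ht =>
    sub_pos.2 ((hstrict t ht zero_lt_one).trans_le (le_ciSup (hbddu t ht) 1))
  -- an allocation of `0` leaves some period with nonpositive consumption
  have hKle : K ≤ ∑ t ∈ Icc 1 T, (⨆ x, u t x) - η := by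
    refine csSup_le (allocVals_nonempty hT hB measurable_const (C := 0) (by simp)) ?_
    rintro _ ⟨Y, hY, rfl⟩
    rw [allocVal_eq_integral_sum hℱ hB hcont hY]
    refine (integral_mono_ae (integrable_finsetSum _ fun t ht =>
      hY.integrable_comp hℱ hB ht (hcont t ht))
      (integrable_const (∑ t ∈ Icc 1 T, (⨆ x, u t x) - η)) ?_).trans_eq (by simp)
    filter_upwards [hY.2] with ω hω
    exact sum_le_sum_iSup_sub_inf' hne hmono hbddu hω.le
  have hlim : Tendsto (fun x => ∑ t ∈ Icc 1 T, u t x) atTop (𝓝 (∑ t ∈ Icc 1 T, ⨆ x, u t x)) :=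
    tendsto_finsetSum _ fun t ht => tendsto_atTop_ciSup (hmono t ht) (hbddu t ht)
  obtain ⟨x, hx⟩ := (hlim.eventually (lt_mem_nhds (sub_lt_self _ hη))).exists
  linarith [hK fun _ => x]

lemma exists_util_const_le [IsProbabilityMeasure μ] (hT : 1 ≤ T) (hℱ : ∀ t, ℱ t ≤ mΩ)
    (hB : IsBankAccount ℱ T B)
    (hcont : ∀ t ∈ Icc 1 T, Continuous (u t)) (hstrict : ∀ t ∈ Icc 1 T, StrictMono (u t))
    (hconc : ∀ t ∈ Icc 1 T, ConcaveOn ℝ Set.univ (u t))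
    (hbdd : ∀ w : ℝ, BddAbove (allocVals μ T ℱ u B fun _ => w)) (R : ℝ) :
    ∃ w, (Util μ T ℱ u B fun _ => w) ≤ R := by
  obtain ⟨a, b, hab⟩ := exists_util_const_lt hT hℱ hB hcont hstrict hbdd
  refine exists_le_of_midpoint_concave (f := fun w => Util μ T ℱ u B fun _ => w)
    (fun a b => ?_) hab R
  have hne : ∀ w : ℝ, (allocVals μ T ℱ u B fun _ => w).Nonempty := fun w =>
    allocVals_nonempty hT hB measurable_const (C := |w|) (by simp)
  have hmid : (fun _ : Ω => (1 / 2 : ℝ) * a + 1 / 2 * b) = fun _ => (a + b) / 2 :=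
    funext fun _ => by ring
  have h := util_linearCombination_ge (V₁ := fun _ => a) (V₂ := fun _ => b) (a := 1 / 2)
    (b := 1 / 2) hℱ hB hcont hconc (hne a) (hne b) (by rw [hmid]; exact hbdd _) (by norm_num)
    (by norm_num) (by norm_num)
  simp only [hmid] at h
  linarith

lemma integral_gain_le_of_util_le [IsFiniteMeasure μ] (hT : 1 ≤ T) (hℱ : ∀ t, ℱ t ≤ mΩ)
    (hB : IsBankAccount ℱ T B) (hcont : ∀ t ∈ Icc 1 T, Continuous (u t))
    (hconc : ∀ t ∈ Icc 1 T, ConcaveOn ℝ Set.univ (u t))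
    (hUfin : ∀ V : Ω → ℝ, Measurable[ℱ T] V → (∃ C : ℝ, ∀ᵐ ω ∂μ, |V ω| ≤ C) →
      BddAbove (allocVals μ T ℱ u B V))
    (hW : Measurable[ℱ T] W) (hWC : ∀ᵐ ω ∂μ, |W ω| ≤ C) (hZ : Measurable[ℱ T] Z)
    (hZC : ∀ᵐ ω ∂μ, |Z ω| ≤ C) (hle : Util μ T ℱ u B W ≤ Util μ T ℱ u B Z)
    (hY : IsAlloc μ T ℱ B Z Y) {k : ℝ} (hk : 1 ≤ k) :
    ∫ ω, (u T (Y T ω / B T ω + k * (W ω - Z ω)) - u T (Y T ω / B T ω)) ∂μ ≤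
      Util μ T ℱ u B Z - allocVal μ T u B Y := by
  have hk0 : 0 < k := zero_lt_one.trans_le hk
  set V : Ω → ℝ := fun ω => Z ω + k * (W ω - Z ω)
  have hG : Measurable[ℱ T] fun ω => k * (W ω - Z ω) := (hW.sub hZ).const_mul k
  have hGC : ∀ᵐ ω ∂μ, |k * (W ω - Z ω)| ≤ k * (C + C) := by
    filter_upwards [hWC, hZC] with ω h₁ h₂
    rw [abs_mul, abs_of_pos hk0]
    exact mul_le_mul_of_nonneg_left ((abs_sub _ _).trans (add_le_add h₁ h₂)) hk0.le
  have hVC : ∀ᵐ ω ∂μ, |V ω| ≤ C + k * (C + C) := by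
    filter_upwards [hZC, hGC] with ω h₁ h₂ using (abs_add_le _ _).trans (add_le_add h₁ h₂)
  -- `W` lies on the segment from `Z` to `V`, so concavity of `Util` gives `Util V ≤ Util Z`
  have hWV : (fun ω => (1 - 1 / k) * Z ω + 1 / k * V ω) = W := funext fun ω => by
    field_simp
    ring
  have hV : Measurable[ℱ T] V := hZ.add hG
  have hconc := util_linearCombination_ge (V₁ := Z) (V₂ := V) (a := 1 - 1 / k) (b := 1 / k) hℱ hB
    hcont hconc (allocVals_nonempty hT hB hZ hZC) (allocVals_nonempty hT hB hV hVC)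
    (by rw [hWV]; exact hUfin W hW ⟨C, hWC⟩) (by rw [sub_nonneg, div_le_one hk0]; exact hk)
    (by positivity) (by ring)
  rw [hWV] at hconc
  have hVZ : Util μ T ℱ u B V ≤ Util μ T ℱ u B Z :=
    le_of_mul_le_mul_left (by linarith) (one_div_pos.2 hk0)
  have hval := allocVal_update_last hT hℱ hB hcont hY hG hGC
  have hupd := allocVal_le_util (hUfin V hV ⟨_, hVC⟩) (hY.update_last hT hB hG hGC)
  linarith

lemma allocVal_le_util_const_add_measureReal_mul [IsProbabilityMeasure μ] (hT : 1 ≤ T)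
    (hℱ : ∀ t, ℱ t ≤ mΩ) (hB : IsBankAccount ℱ T B)
    (hcont : ∀ t ∈ Icc 1 T, Continuous (u t)) (hmono : ∀ t ∈ Icc 1 T, Monotone (u t))
    (hbdd : ∀ w : ℝ, BddAbove (allocVals μ T ℱ u B fun _ => w)) (hY : IsAlloc μ T ℱ B Z Y)
    (hZC : ∀ᵐ ω ∂μ, Z ω ≤ C) {s : ℝ} (hs : ∀ x, u T x ≤ s) {A : Set Ω} (hA : MeasurableSet A)
    (w : ℝ) :
    allocVal μ T u B Y ≤ (Util μ T ℱ u B fun _ => C) +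
      μ.real (A ∩ {ω | C - w < Y T ω / B T ω}) *
        ((Util μ T ℱ u B fun _ => w) - u T 0 + s - Util μ T ℱ u B fun _ => C) := by
  have hT' : T ∈ Icc 1 T := Finset.right_mem_Icc.2 hT
  rw [allocVal_eq_integral_sum hℱ hB hcont hY]
  refine integral_le_add_measureReal_mul (integrable_finsetSum _ fun t ht =>
    hY.integrable_comp hℱ hB ht (hcont t ht))
    (hA.inter (measurableSet_lt measurable_const (hY.measurable_div hℱ hB hT'))) ?_ ?_
  · filter_upwards [hY.2, hZC] with ω hsum hZω
    exact sum_le_util_const hT hB hmono (hbdd C) (hsum.trans_le hZω)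
  · filter_upwards [hY.2, hZC] with ω hsum hZω ⟨_, hlast⟩
    have hlast' : C - w < Y T ω / B T ω := hlast
    have := sum_le_util_const_sub_add_last hT hB hmono (hbdd w)
      (x := fun t => Y t ω / B t ω) (by simp only [hsum]; linarith)
    linarith [hs (Y T ω / B T ω)]

lemma allocVal_le_util_const_add_half_mul [IsProbabilityMeasure μ] (hT : 1 ≤ T)
    (hℱ : ∀ t, ℱ t ≤ mΩ) (hB : IsBankAccount ℱ T B) (hcont : ∀ t ∈ Icc 1 T, Continuous (u t))
    (hmono : ∀ t ∈ Icc 1 T, Monotone (u t))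
    (hbdd : ∀ w : ℝ, BddAbove (allocVals μ T ℱ u B fun _ => w)) (hY : IsAlloc μ T ℱ B Z Y)
    (hZC : ∀ᵐ ω ∂μ, |Z ω| ≤ C) {D : Ω → ℝ} (hD : Measurable D) {CD : ℝ}
    (hDC : ∀ᵐ ω ∂μ, |D ω| ≤ CD) (hD0 : ∀ᵐ ω ∂μ, 0 ≤ D ω) {δ : ℝ} (hδ : 0 < δ)
    (hgain : ∀ k : ℝ, 1 ≤ k → ∫ ω, (u T (Y T ω / B T ω + k * D ω) - u T (Y T ω / B T ω)) ∂μ ≤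
      Util μ T ℱ u B Z - allocVal μ T u B Y)
    (hs : BddAbove (Set.range (u T))) {w : ℝ}
    (hw : (Util μ T ℱ u B fun _ => w) - u T 0 + (⨆ x, u T x) - (Util μ T ℱ u B fun _ => C) ≤ 0)
    (hY_opt : Util μ T ℱ u B Z - allocVal μ T u B Y <
      μ.real {ω | δ ≤ D ω} * ((⨆ x, u T x) - u T (C - w)) / 2) :
    allocVal μ T u B Y ≤ (Util μ T ℱ u B fun _ => C) + μ.real {ω | δ ≤ D ω} / 2 *
      ((Util μ T ℱ u B fun _ => w) - u T 0 + (⨆ x, u T x) - Util μ T ℱ u B fun _ => C) := by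
  have hT' : T ∈ Icc 1 T := Finset.right_mem_Icc.2 hT
  obtain ⟨CY, hCY⟩ := hY.exists_ae_abs_div_le hB hT'
  have hhalf := half_lt_measureReal_inter_of_integral_gain_le (hmono T hT') (hcont T hT')
    (hY.measurable_div hℱ hB hT') hCY hD hDC hD0 hδ hgain hs hY_opt
  have hup := allocVal_le_util_const_add_measureReal_mul hT hℱ hB hcont hmono hbdd hY
    (hZC.mono fun ω h => (abs_le.1 h).2) (fun x => le_ciSup hs x)
    (measurableSet_le measurable_const hD (f := fun _ => δ)) w
  linarith [mul_le_mul_of_nonpos_right hhalf.le hw]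

theorem exists_util_sub_allocVal_lt_integral_gain [IsProbabilityMeasure μ] (hT : 1 ≤ T)
    (hℱ : ∀ t, ℱ t ≤ mΩ) (hB : IsBankAccount ℱ T B) (hcont : ∀ t ∈ Icc 1 T, Continuous (u t))
    (hstrict : ∀ t ∈ Icc 1 T, StrictMono (u t))
    (hconc : ∀ t ∈ Icc 1 T, ConcaveOn ℝ Set.univ (u t))
    (hUfin : ∀ V : Ω → ℝ, Measurable[ℱ T] V → (∃ C : ℝ, ∀ᵐ ω ∂μ, |V ω| ≤ C) →
      BddAbove (allocVals μ T ℱ u B V))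
    (hZ : Measurable[ℱ T] Z) (hZC : ∀ᵐ ω ∂μ, |Z ω| ≤ C) {D : Ω → ℝ} (hD : Measurable D)
    {CD : ℝ} (hDC : ∀ᵐ ω ∂μ, |D ω| ≤ CD) (hD0 : ∀ᵐ ω ∂μ, 0 ≤ D ω) {δ : ℝ} (hδ : 0 < δ)
    (hA : 0 < μ {ω | δ ≤ D ω}) :
    ∃ Y, IsAlloc μ T ℱ B Z Y ∧ ∃ k : ℝ, 1 ≤ k ∧ Util μ T ℱ u B Z - allocVal μ T u B Y <
      ∫ ω, (u T (Y T ω / B T ω + k * D ω) - u T (Y T ω / B T ω)) ∂μ := by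
  by_contra! hgain
  have hT' : T ∈ Icc 1 T := Finset.right_mem_Icc.2 hT
  have hmono : ∀ t ∈ Icc 1 T, Monotone (u t) := fun t ht => (hstrict t ht).monotone
  have hbdd : ∀ w : ℝ, BddAbove (allocVals μ T ℱ u B fun _ => w) := fun w =>
    hUfin _ measurable_const ⟨|w|, by simp⟩
  have hne := allocVals_nonempty (u := u) hT hB hZ hZC
  have hs : BddAbove (Set.range (u T)) := by
    obtain ⟨_, Y₀, hY₀, -⟩ := id hne
    obtain ⟨C₀, hC₀⟩ := hY₀.exists_ae_abs_div_le hB hT'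
    exact bddAbove_range_of_integral_gain_le (hmono T hT') (hcont T hT')
      (hY₀.measurable_div hℱ hB hT') hC₀ hD hDC hD0 hδ hA (hgain Y₀ hY₀)
  have hp : 0 < μ.real {ω | δ ≤ D ω} := ENNReal.toReal_pos hA.ne' (measure_ne_top _ _)
  set p := μ.real {ω | δ ≤ D ω}
  set a := Util μ T ℱ u B fun _ => C
  set c := Util μ T ℱ u B Z
  obtain ⟨w, hw⟩ := exists_util_const_le hT hℱ hB hcont hstrict hconc hbdd
    (a - 2 * (|a - c| + 1) / p - (⨆ x, u T x) + u T 0)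
  set β := (Util μ T ℱ u B fun _ => w) - u T 0 + (⨆ x, u T x) - a
  have hβ : β ≤ -(2 * (|a - c| + 1) / p) := by linarith
  have hβ₀ : β ≤ 0 := hβ.trans (neg_nonpos.2 (by positivity))
  have hη : 0 < (⨆ x, u T x) - u T (C - w) :=
    sub_pos.2 ((hstrict T hT' (lt_add_one _)).trans_le (le_ciSup hs _))
  obtain ⟨Y, hY, hYc⟩ := exists_allocVal_gt hne
    (ε := min 1 (p * ((⨆ x, u T x) - u T (C - w)) / 2)) (by positivity)
  have hYval := allocVal_le_util_const_add_half_mul hT hℱ hB hcont hmono hbdd hY hZC hD hDC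
    hD0 hδ (hgain Y hY) hs hβ₀ (by linarith [min_le_right 1 (p * ((⨆ x, u T x) - u T (C - w)) / 2)])
  have hpβ : p / 2 * β ≤ -(|a - c| + 1) :=
    calc p / 2 * β ≤ p / 2 * -(2 * (|a - c| + 1) / p) :=
          mul_le_mul_of_nonneg_left hβ (by positivity)
      _ = -(|a - c| + 1) := by field_simp
  linarith [le_abs_self (a - c), min_le_left 1 (p * ((⨆ x, u T x) - u T (C - w)) / 2)]

end Allocations

/-- Strict monotonicity of the utility functional (Proposition 2.5(a)):
if `W ≥ Z` a.s. and `P(W > Z) > 0` then `U(W) > U(Z)`. -/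
theorem util_strictMono
    {Ω : Type*} [mΩ : MeasurableSpace Ω] (μ : Measure Ω) [IsProbabilityMeasure μ]
    (T : ℕ) (hT : 1 ≤ T)
    (ℱ : ℕ → MeasurableSpace Ω) (hℱmono : Monotone ℱ) (hℱle : ∀ t, ℱ t ≤ mΩ)
    (r : ℕ → Ω → ℝ)
    (hr_meas : ∀ t ∈ Finset.Icc 1 T, Measurable[ℱ (t - 1)] (r t))
    (hr_nonneg : ∀ t ∈ Finset.Icc 1 T, ∀ ω, 0 ≤ r t ω)
    (hr_bdd : ∀ t ∈ Finset.Icc 1 T, ∃ C : ℝ, ∀ ω, r t ω ≤ C)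
    (B : ℕ → Ω → ℝ) (hB : ∀ t ω, B t ω = ∏ k ∈ Finset.Icc 1 t, (1 + r k ω))
    (u : ℕ → ℝ → ℝ)
    (hu_conc : ∀ t ∈ Finset.Icc 1 T, StrictConcaveOn ℝ (Set.univ : Set ℝ) (u t))
    (hu_diff : ∀ t ∈ Finset.Icc 1 T, ContDiff ℝ 1 (u t))
    (hu_deriv : ∀ t ∈ Finset.Icc 1 T, ∀ x : ℝ, 0 < deriv (u t) x)
    (hUfin : ∀ V : Ω → ℝ, Measurable[ℱ T] V → (∃ C : ℝ, ∀ᵐ ω ∂μ, |V ω| ≤ C) →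
      BddAbove {s : ℝ | ∃ Y, IsAlloc μ T ℱ B V Y ∧ s = allocVal μ T u B Y})
    (W Z : Ω → ℝ)
    (hWmeas : Measurable[ℱ T] W) (hWbdd : ∃ C : ℝ, ∀ᵐ ω ∂μ, |W ω| ≤ C)
    (hZmeas : Measurable[ℱ T] Z) (hZbdd : ∃ C : ℝ, ∀ᵐ ω ∂μ, |Z ω| ≤ C)
    (hWZ : ∀ᵐ ω ∂μ, Z ω ≤ W ω) (hgt : 0 < μ {ω | Z ω < W ω}) :
    Util μ T ℱ u B Z < Util μ T ℱ u B W := by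
  have hB' := isBankAccount_of_rate hℱmono hr_meas hr_nonneg hr_bdd hB
  have hcont : ∀ t ∈ Icc 1 T, Continuous (u t) := fun t ht => (hu_diff t ht).continuous
  have hstrict : ∀ t ∈ Icc 1 T, StrictMono (u t) := fun t ht =>
    strictMono_of_deriv_pos (hu_deriv t ht)
  have hconc : ∀ t ∈ Icc 1 T, ConcaveOn ℝ Set.univ (u t) := fun t ht => (hu_conc t ht).concaveOn
  obtain ⟨CW, hCW⟩ := hWbdd
  obtain ⟨CZ, hCZ⟩ := hZbdd
  have hWC : ∀ᵐ ω ∂μ, |W ω| ≤ max CW CZ := hCW.mono fun ω h => h.trans (le_max_left _ _)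
  have hZC : ∀ᵐ ω ∂μ, |Z ω| ≤ max CW CZ := hCZ.mono fun ω h => h.trans (le_max_right _ _)
  have hDC : ∀ᵐ ω ∂μ, |W ω - Z ω| ≤ max CW CZ + max CW CZ := by
    filter_upwards [hWC, hZC] with ω h₁ h₂ using (abs_sub _ _).trans (add_le_add h₁ h₂)
  obtain ⟨δ, hδ, hA⟩ := exists_pos_measure_le_of_pos_measure_pos (μ := μ)
    (f := fun ω => W ω - Z ω) (by simpa only [sub_pos] using hgt)
  obtain ⟨Y, hY, k, hk, hlt⟩ := exists_util_sub_allocVal_lt_integral_gain hT hℱle hB' hcont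
    hstrict hconc hUfin hZmeas hZC ((hWmeas.sub hZmeas).mono (hℱle T) le_rfl) hDC
    (hWZ.mono fun ω h => sub_nonneg.2 h) hδ hA
  by_contra! hle
  exact hlt.not_ge
    (integral_gain_le_of_util_le hT hℱle hB' hcont hconc hUfin hWmeas hWC hZmeas hZC hle hY hk)
end
end

section
/- The indifference price functional H : L^∞ → ℝ is strictly monotone and convex: (a) if W ≥ Z a.s. and P(W > Z) > 0, then H(W) > H(Z); (b) for a ∈ [0,1], H(aW + (1−a)Z) ≤ a H(W) + (1−a) H(Z). -/
open MeasureTheory Finset Real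

noncomputable section

/-!
Both properties of `H` are inherited from the utility functional `U`. Allocations of two claims
can be mixed and shifted, so `U` is monotone and concave, and it is strictly increasing under a
positive constant: spread the constant evenly over the dates; some discounted coordinate lies
below the average, and there concavity makes the gain uniformly positive. Convexity of `H`
follows at once.

Strict monotonicity of `H` comes down to `U (V - ε 1_A) < U V` whenever `P(A) > 0`. If `u_T` is
unbounded above, `U (V + l 1_A)` exceeds `U V` for large `l`, and concavity of `U` along the
line through `V - ε 1_A`, `V`, `V + l 1_A` gives the claim. If `u_T` is bounded above, an almost
optimal allocation of `V - ε 1_A` cannot put a huge last coordinate on much of `A`: the other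
coordinates would then sum to a very negative amount, and the sup-convolution of the utilities
tends to `-∞`. Paying `ε` at time `T` on the rest of `A` then gains a fixed amount.
-/

open Filter

theorem ConcaveOn.sub_le_sub_of_le {f : ℝ → ℝ} (hf : ConcaveOn ℝ Set.univ f) {x z h : ℝ}
    (hxz : x ≤ z) (hh : 0 ≤ h) : f (z + h) - f z ≤ f (x + h) - f x := by
  rcases hxz.eq_or_lt with rfl | hlt
  · rfl
  -- `x + h` and `z` are the convex combinations of `x` and `z + h` with swapped weights.
  have hpos : 0 < z + h - x := by linarith
  have hw₁ : 0 ≤ (z - x) / (z + h - x) := div_nonneg (by linarith) hpos.le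
  have hw₂ : 0 ≤ h / (z + h - x) := div_nonneg hh hpos.le
  have hsum : (z - x) / (z + h - x) + h / (z + h - x) = 1 := by field_simp; ring
  have h₁ := hf.2 (Set.mem_univ x) (Set.mem_univ (z + h)) hw₁ hw₂ hsum
  have h₂ := hf.2 (Set.mem_univ x) (Set.mem_univ (z + h)) hw₂ hw₁ ((add_comm _ _).trans hsum)
  have e₁ : ((z - x) / (z + h - x)) • x + (h / (z + h - x)) • (z + h) = x + h := by
    simp only [smul_eq_mul]; field_simp; ring
  have e₂ : (h / (z + h - x)) • x + ((z - x) / (z + h - x)) • (z + h) = z := by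
    simp only [smul_eq_mul]; field_simp; ring
  rw [e₁] at h₁
  rw [e₂] at h₂
  simp only [smul_eq_mul] at h₁ h₂
  linear_combination h₁ + h₂ - (f x + f (z + h)) * hsum

theorem exists_pos_le_sum_sub_of_sum_le {ι : Type*} {s : Finset ι} (hs : s.Nonempty)
    {f : ι → ℝ → ℝ} (hmono : ∀ i ∈ s, StrictMono (f i))
    (hconc : ∀ i ∈ s, ConcaveOn ℝ Set.univ (f i)) (C : ℝ) {h : ℝ} (hh : 0 < h) :
    ∃ δ > 0, ∀ x : ι → ℝ, ∑ i ∈ s, x i ≤ C → δ ≤ ∑ i ∈ s, (f i (x i + h) - f i (x i)) := by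
  set c := C / #s
  refine ⟨s.inf' hs fun i => f i (c + h) - f i c,
    (lt_inf'_iff hs).2 fun i hi => sub_pos.2 (hmono i hi (lt_add_of_pos_right c hh)),
    fun x hx => ?_⟩
  -- Some coordinate lies below the average `c`, where its increment is at least the one at `c`.
  obtain ⟨i, hi, hxi⟩ : ∃ i ∈ s, x i ≤ c := by
    refine exists_le_of_sum_le hs ?_
    rwa [sum_const, nsmul_eq_mul, mul_div_cancel₀ _ (by simpa using hs.ne_empty)]
  have hnonneg : ∀ j ∈ s, 0 ≤ f j (x j + h) - f j (x j) :=
    fun j hj => sub_nonneg.2 ((hmono j hj).monotone (by linarith))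
  calc s.inf' hs (fun i => f i (c + h) - f i c) ≤ f i (c + h) - f i c := inf'_le _ hi
    _ ≤ f i (x i + h) - f i (x i) := (hconc i hi).sub_le_sub_of_le hxi hh.le
    _ ≤ ∑ i ∈ s, (f i (x i + h) - f i (x i)) :=
      single_le_sum (f := fun i => f i (x i + h) - f i (x i)) hnonneg hi

theorem mul_csSup_add_mul_csSup_le {S₁ S₂ : Set ℝ} (h₁ : S₁.Nonempty) (h₂ : S₂.Nonempty)
    {a M : ℝ} (ha₀ : 0 ≤ a) (ha₁ : a ≤ 1)
    (hM : ∀ s₁ ∈ S₁, ∀ s₂ ∈ S₂, a * s₁ + (1 - a) * s₂ ≤ M) :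
    a * sSup S₁ + (1 - a) * sSup S₂ ≤ M := by
  refine le_of_forall_pos_le_add fun δ hδ => ?_
  obtain ⟨s₁, hs₁, hlt₁⟩ := exists_lt_of_lt_csSup h₁ (sub_lt_self (sSup S₁) hδ)
  obtain ⟨s₂, hs₂, hlt₂⟩ := exists_lt_of_lt_csSup h₂ (sub_lt_self (sSup S₂) hδ)
  nlinarith [hM s₁ hs₁ s₂ hs₂]

theorem exists_pos_measure_add_le {Ω : Type*} [MeasurableSpace Ω] {μ : Measure Ω}
    {f g : Ω → ℝ} (h : 0 < μ {ω | f ω < g ω}) : ∃ ε > 0, 0 < μ {ω | f ω + ε ≤ g ω} := by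
  have hsub : {ω | f ω < g ω} ⊆ ⋃ n : ℕ, {ω | f ω + 1 / (n + 1) ≤ g ω} := fun ω hω => by
    obtain ⟨n, hn⟩ := exists_nat_one_div_lt (sub_pos.2 hω : (0 : ℝ) < g ω - f ω)
    exact Set.mem_iUnion.2 ⟨n, show f ω + 1 / (n + 1) ≤ g ω by linarith⟩
  obtain ⟨n, hn⟩ := exists_measure_pos_of_not_measure_iUnion_null
    (pos_iff_ne_zero.1 (h.trans_le (measure_mono hsub)))
  exact ⟨1 / (n + 1), by positivity, hn⟩

def MemLinfty {Ω : Type*} (m : MeasurableSpace Ω) {_ : MeasurableSpace Ω} (μ : Measure Ω)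
    (V : Ω → ℝ) : Prop :=
  Measurable[m] V ∧ ∃ C : ℝ, ∀ᵐ ω ∂μ, |V ω| ≤ C

section MemLinfty

variable {Ω : Type*} {m : MeasurableSpace Ω} [mΩ : MeasurableSpace Ω] {μ : Measure Ω}
  {V W : Ω → ℝ}

theorem memLinfty_const (c : ℝ) : MemLinfty m μ (fun _ => c) :=
  ⟨measurable_const, |c|, ae_of_all _ fun _ => le_rfl⟩

theorem memLinfty_indicator_const {A : Set Ω} (hA : MeasurableSet[m] A) (c : ℝ) :
    MemLinfty m μ (A.indicator fun _ => c) :=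
  ⟨measurable_const.indicator hA, |c|, ae_of_all _ fun ω => by
    by_cases hω : ω ∈ A <;> simp [hω]⟩

theorem MemLinfty.mono (hV : MemLinfty m μ V) {m' : MeasurableSpace Ω} (hm : m ≤ m') :
    MemLinfty m' μ V :=
  ⟨hV.1.mono hm le_rfl, hV.2⟩

theorem MemLinfty.add (hV : MemLinfty m μ V) (hW : MemLinfty m μ W) :
    MemLinfty m μ (fun ω => V ω + W ω) := by
  obtain ⟨C, hC⟩ := hV.2
  obtain ⟨D, hD⟩ := hW.2
  refine ⟨hV.1.add hW.1, C + D, ?_⟩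
  filter_upwards [hC, hD] with ω hCω hDω
  exact (abs_add_le _ _).trans (add_le_add hCω hDω)

theorem MemLinfty.sub (hV : MemLinfty m μ V) (hW : MemLinfty m μ W) :
    MemLinfty m μ (fun ω => V ω - W ω) := by
  obtain ⟨C, hC⟩ := hV.2
  obtain ⟨D, hD⟩ := hW.2
  refine ⟨hV.1.sub hW.1, C + D, ?_⟩
  filter_upwards [hC, hD] with ω hCω hDω
  exact (abs_sub _ _).trans (add_le_add hCω hDω)

theorem MemLinfty.mul (hV : MemLinfty m μ V) (hW : MemLinfty m μ W) :
    MemLinfty m μ (fun ω => V ω * W ω) := by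
  obtain ⟨C, hC⟩ := hV.2
  obtain ⟨D, hD⟩ := hW.2
  refine ⟨hV.1.mul hW.1, |C| * |D|, ?_⟩
  filter_upwards [hC, hD] with ω hCω hDω
  rw [abs_mul]
  exact mul_le_mul (hCω.trans (le_abs_self C)) (hDω.trans (le_abs_self D)) (abs_nonneg _)
    (abs_nonneg _)

theorem MemLinfty.const_mul (hV : MemLinfty m μ V) (c : ℝ) :
    MemLinfty m μ (fun ω => c * V ω) :=
  (memLinfty_const c).mul hV

theorem MemLinfty.finset_prod {ι : Type*} (s : Finset ι) {f : ι → Ω → ℝ}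
    (hf : ∀ i ∈ s, MemLinfty m μ (f i)) : MemLinfty m μ (fun ω => ∏ i ∈ s, f i ω) := by
  classical
  induction s using Finset.induction_on with
  | empty => simpa using memLinfty_const 1
  | insert i s hi ih =>
    simp only [prod_insert hi]
    exact (hf i (mem_insert_self i s)).mul (ih fun j hj => hf j (mem_insert_of_mem hj))

theorem MemLinfty.div_of_one_le (hV : MemLinfty m μ V) (hW : Measurable[m] W)
    (hW₁ : ∀ ω, 1 ≤ W ω) : MemLinfty m μ (fun ω => V ω / W ω) := by
  obtain ⟨C, hC⟩ := hV.2
  refine ⟨hV.1.div hW, C, ?_⟩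
  filter_upwards [hC] with ω hCω
  rw [abs_div]
  exact (div_le_self (abs_nonneg _) ((hW₁ ω).trans (le_abs_self _))).trans hCω

theorem MemLinfty.integrable_comp [IsFiniteMeasure μ] (hV : MemLinfty m μ V) (hm : m ≤ mΩ)
    {f : ℝ → ℝ} (hf : Continuous f) : Integrable (fun ω => f (V ω)) μ := by
  obtain ⟨C, hC⟩ := hV.2
  obtain ⟨M, hM⟩ := (isCompact_Icc (a := -C) (b := C)).exists_bound_of_continuousOn
    hf.continuousOn
  refine Integrable.mono' (integrable_const M)
    (hf.measurable.comp (hV.1.mono hm le_rfl)).aestronglyMeasurable ?_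
  filter_upwards [hC] with ω hω
  exact hM _ (abs_le.1 hω)

theorem memLinfty_prod_one_add {ℱ : ℕ → MeasurableSpace Ω} (hℱ : Monotone ℱ)
    {r : ℕ → Ω → ℝ} {t : ℕ} (hr_meas : ∀ k ∈ Icc 1 t, Measurable[ℱ (k - 1)] (r k))
    (hr_nonneg : ∀ k ∈ Icc 1 t, ∀ ω, 0 ≤ r k ω) (hr_bdd : ∀ k ∈ Icc 1 t, ∃ C : ℝ, ∀ ω, r k ω ≤ C) :
    MemLinfty (ℱ t) μ (fun ω => ∏ k ∈ Icc 1 t, (1 + r k ω)) := by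
  refine MemLinfty.finset_prod _ fun k hk => (memLinfty_const 1).add ?_
  obtain ⟨C, hC⟩ := hr_bdd k hk
  refine ⟨(hr_meas k hk).mono (hℱ (by grind)) le_rfl, C, ae_of_all _ fun ω => ?_⟩
  rw [abs_of_nonneg (hr_nonneg k hk ω)]
  exact hC ω

end MemLinfty

def supConvValues (T : ℕ) (u : ℕ → ℝ → ℝ) (m : ℝ) : Set ℝ :=
  {x | ∃ y : ℕ → ℝ, ∑ t ∈ Icc 1 T, y t = m ∧ x = ∑ t ∈ Icc 1 T, u t (y t)}

def supConv (T : ℕ) (u : ℕ → ℝ → ℝ) (m : ℝ) : ℝ := sSup (supConvValues T u m)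

theorem sum_Icc_add_div {T : ℕ} (hT : 1 ≤ T) (y : ℕ → ℝ) (h : ℝ) :
    ∑ t ∈ Icc 1 T, (y t + h / T) = ∑ t ∈ Icc 1 T, y t + h := by
  have hT' : (T : ℝ) ≠ 0 := by exact_mod_cast (zero_lt_one.trans_le hT).ne'
  simp [sum_add_distrib, mul_div_cancel₀ _ hT']

theorem supConvValues_nonempty {T : ℕ} (hT : 1 ≤ T) (u : ℕ → ℝ → ℝ) (m : ℝ) :
    (supConvValues T u m).Nonempty :=
  ⟨_, fun _ => 0 + m / T, by rw [sum_Icc_add_div hT]; simp, rfl⟩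

theorem supConv_le {T : ℕ} (hT : 1 ≤ T) {u : ℕ → ℝ → ℝ} {m M : ℝ}
    (h : ∀ y : ℕ → ℝ, ∑ t ∈ Icc 1 T, y t = m → ∑ t ∈ Icc 1 T, u t (y t) ≤ M) :
    supConv T u m ≤ M :=
  csSup_le (supConvValues_nonempty hT u m) fun _ ⟨y, hy, hx⟩ => hx ▸ h y hy

def allocValues {Ω : Type*} [mΩ : MeasurableSpace Ω] (μ : Measure Ω) (T : ℕ)
    (ℱ : ℕ → MeasurableSpace Ω) (u : ℕ → ℝ → ℝ) (B : ℕ → Ω → ℝ) (V : Ω → ℝ) : Set ℝ :=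
  {s : ℝ | ∃ Y, IsAlloc μ T ℱ B V Y ∧ s = allocVal μ T u B Y}

structure UtilityModel {Ω : Type*} [mΩ : MeasurableSpace Ω] (μ : Measure Ω) (T : ℕ)
    (ℱ : ℕ → MeasurableSpace Ω) (B : ℕ → Ω → ℝ) (u : ℕ → ℝ → ℝ) : Prop where
  one_le_horizon : 1 ≤ T
  le_ambient : ∀ t, ℱ t ≤ mΩ
  memLinfty_discount : ∀ t ∈ Icc 1 T, MemLinfty (ℱ t) μ (B t)
  one_le_discount : ∀ t ∈ Icc 1 T, ∀ ω, 1 ≤ B t ω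
  strictMono_utility : ∀ t ∈ Icc 1 T, StrictMono (u t)
  concaveOn_utility : ∀ t ∈ Icc 1 T, ConcaveOn ℝ Set.univ (u t)
  continuous_utility : ∀ t ∈ Icc 1 T, Continuous (u t)
  bddAbove_allocValues : ∀ V, MemLinfty (ℱ T) μ V → BddAbove (allocValues μ T ℱ u B V)

def shiftAlloc {Ω : Type*} (B Y g : ℕ → Ω → ℝ) : ℕ → Ω → ℝ :=
  fun t ω => Y t ω + g t ω * B t ω

section IsAlloc

variable {Ω : Type*} [mΩ : MeasurableSpace Ω] {μ : Measure Ω} {T : ℕ}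
  {ℱ : ℕ → MeasurableSpace Ω} {B : ℕ → Ω → ℝ} {V₁ V₂ : Ω → ℝ} {Y Y₁ Y₂ : ℕ → Ω → ℝ}

theorem isAlloc_zero : IsAlloc μ T ℱ B (fun _ => 0) (fun _ _ => 0) :=
  ⟨fun _ _ => memLinfty_const 0, ae_of_all _ fun _ => by simp⟩

theorem IsAlloc.memLinfty (hY : IsAlloc μ T ℱ B V₁ Y) {t : ℕ} (ht : t ∈ Icc 1 T) :
    MemLinfty (ℱ t) μ (Y t) :=
  hY.1 t ht

theorem IsAlloc.combo (hY₁ : IsAlloc μ T ℱ B V₁ Y₁) (hY₂ : IsAlloc μ T ℱ B V₂ Y₂) (a b : ℝ) :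
    IsAlloc μ T ℱ B (fun ω => a * V₁ ω + b * V₂ ω) (fun t ω => a * Y₁ t ω + b * Y₂ t ω) := by
  refine ⟨fun t ht => ((hY₁.memLinfty ht).const_mul a).add ((hY₂.memLinfty ht).const_mul b), ?_⟩
  filter_upwards [hY₁.2, hY₂.2] with ω h₁ h₂
  rw [← h₁, ← h₂, mul_sum, mul_sum, ← sum_add_distrib]
  exact sum_congr rfl fun t _ => by ring

end IsAlloc

namespace UtilityModel

variable {Ω : Type*} [mΩ : MeasurableSpace Ω] {μ : Measure Ω} {T : ℕ}
  {ℱ : ℕ → MeasurableSpace Ω} {B : ℕ → Ω → ℝ} {u : ℕ → ℝ → ℝ} {V V' V₁ V₂ W Z : Ω → ℝ}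
  {Y g : ℕ → Ω → ℝ} {A : Set Ω}

section Allocations

theorem horizon_mem (hM : UtilityModel μ T ℱ B u) : T ∈ Icc 1 T :=
  mem_Icc.2 ⟨hM.one_le_horizon, le_rfl⟩

theorem memLinfty_div_discount (hM : UtilityModel μ T ℱ B u) {t : ℕ} (ht : t ∈ Icc 1 T)
    {X : Ω → ℝ} (hX : MemLinfty (ℱ t) μ X) : MemLinfty mΩ μ (fun ω => X ω / B t ω) :=
  (hX.div_of_one_le (hM.memLinfty_discount t ht).1 (hM.one_le_discount t ht)).mono
    (hM.le_ambient t)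

theorem allocVal_le_util (hM : UtilityModel μ T ℱ B u) (hV : MemLinfty (ℱ T) μ V)
    (hY : IsAlloc μ T ℱ B V Y) : allocVal μ T u B Y ≤ Util μ T ℱ u B V :=
  le_csSup (hM.bddAbove_allocValues V hV) ⟨Y, hY, rfl⟩

theorem shiftAlloc_div (hM : UtilityModel μ T ℱ B u) {t : ℕ} (ht : t ∈ Icc 1 T) (ω : Ω) :
    shiftAlloc B Y g t ω / B t ω = Y t ω / B t ω + g t ω := by
  have hB : B t ω ≠ 0 := (zero_lt_one.trans_le (hM.one_le_discount t ht ω)).ne'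
  rw [shiftAlloc, add_div, mul_div_cancel_right₀ _ hB]

theorem isAlloc_shiftAlloc (hM : UtilityModel μ T ℱ B u) (hY : IsAlloc μ T ℱ B V Y)
    (hg : ∀ t ∈ Icc 1 T, MemLinfty (ℱ t) μ (g t))
    (hV' : ∀ᵐ ω ∂μ, V ω + ∑ t ∈ Icc 1 T, g t ω = V' ω) :
    IsAlloc μ T ℱ B V' (shiftAlloc B Y g) := by
  refine ⟨fun t ht => (hY.memLinfty ht).add ((hg t ht).mul (hM.memLinfty_discount t ht)), ?_⟩
  filter_upwards [hY.2, hV'] with ω hYω hV'ω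
  rw [← hV'ω, ← hYω, ← sum_add_distrib]
  exact sum_congr rfl fun t ht => hM.shiftAlloc_div ht ω

theorem isAlloc_shiftAlloc_single (hM : UtilityModel μ T ℱ B u) (hY : IsAlloc μ T ℱ B V Y)
    {G : Ω → ℝ} (hG : MemLinfty (ℱ T) μ G) (hV' : ∀ᵐ ω ∂μ, V ω + G ω = V' ω) :
    IsAlloc μ T ℱ B V' (shiftAlloc B Y (Pi.single T G)) := by
  refine hM.isAlloc_shiftAlloc hY (fun t _ => ?_) ?_
  · rcases eq_or_ne t T with rfl | htT
    · simpa using hG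
    · rw [Pi.single_eq_of_ne htT]
      exact memLinfty_const 0
  · filter_upwards [hV'] with ω hω
    rwa [sum_eq_single_of_mem T hM.horizon_mem fun t _ htT => by simp [Pi.single_eq_of_ne htT],
      Pi.single_eq_same]

theorem allocValues_nonempty (hM : UtilityModel μ T ℱ B u) (hV : MemLinfty (ℱ T) μ V) :
    (allocValues μ T ℱ u B V).Nonempty :=
  ⟨_, _, hM.isAlloc_shiftAlloc_single isAlloc_zero hV (ae_of_all _ fun _ => zero_add _), rfl⟩

theorem util_le (hM : UtilityModel μ T ℱ B u) (hV : MemLinfty (ℱ T) μ V) {M : ℝ}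
    (h : ∀ Y, IsAlloc μ T ℱ B V Y → allocVal μ T u B Y ≤ M) : Util μ T ℱ u B V ≤ M :=
  csSup_le (hM.allocValues_nonempty hV) fun _ ⟨Y, hY, hs⟩ => hs ▸ h Y hY

end Allocations

section FiniteMeasure

variable [IsFiniteMeasure μ]

theorem integrable_utility (hM : UtilityModel μ T ℱ B u) (hY : IsAlloc μ T ℱ B V Y) {t : ℕ}
    (ht : t ∈ Icc 1 T) : Integrable (fun ω => u t (Y t ω / B t ω)) μ :=
  (hM.memLinfty_div_discount ht (hY.memLinfty ht)).integrable_comp le_rfl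
    (hM.continuous_utility t ht)

theorem allocVal_add_integral_le (hM : UtilityModel μ T ℱ B u) (hY : IsAlloc μ T ℱ B V Y)
    (hY' : IsAlloc μ T ℱ B V' (shiftAlloc B Y g)) {F : Ω → ℝ} (hF : Integrable F μ)
    (hFle : ∀ᵐ ω ∂μ, F ω ≤ ∑ t ∈ Icc 1 T, (u t (Y t ω / B t ω + g t ω) - u t (Y t ω / B t ω))) :
    allocVal μ T u B Y + ∫ ω, F ω ∂μ ≤ allocVal μ T u B (shiftAlloc B Y g) := by
  have hint : ∀ t ∈ Icc 1 T,
      Integrable (fun ω => u t (Y t ω / B t ω + g t ω) - u t (Y t ω / B t ω)) μ := fun t ht => by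
    have h := (hM.integrable_utility hY' ht).sub (hM.integrable_utility hY ht)
    simp only [hM.shiftAlloc_div ht] at h
    exact h
  have hgain : allocVal μ T u B (shiftAlloc B Y g) - allocVal μ T u B Y =
      ∫ ω, ∑ t ∈ Icc 1 T, (u t (Y t ω / B t ω + g t ω) - u t (Y t ω / B t ω)) ∂μ := by
    rw [integral_finsetSum _ hint, allocVal, allocVal, ← sum_sub_distrib]
    refine sum_congr rfl fun t ht => ?_
    rw [← integral_sub (hM.integrable_utility hY' ht) (hM.integrable_utility hY ht)]
    simp only [hM.shiftAlloc_div ht]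
  linarith [integral_mono_ae hF (integrable_finsetSum _ hint) hFle]

theorem allocVal_add_integral_le_single (hM : UtilityModel μ T ℱ B u)
    (hY : IsAlloc μ T ℱ B V Y) {G : Ω → ℝ}
    (hY' : IsAlloc μ T ℱ B V' (shiftAlloc B Y (Pi.single T G))) {F : Ω → ℝ}
    (hF : Integrable F μ)
    (hFle : ∀ᵐ ω ∂μ, F ω ≤ u T (Y T ω / B T ω + G ω) - u T (Y T ω / B T ω)) :
    allocVal μ T u B Y + ∫ ω, F ω ∂μ ≤ allocVal μ T u B (shiftAlloc B Y (Pi.single T G)) := by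
  refine hM.allocVal_add_integral_le hY hY' hF ?_
  filter_upwards [hFle] with ω hω
  rwa [sum_eq_single_of_mem T hM.horizon_mem fun t _ htT => by simp [Pi.single_eq_of_ne htT],
    Pi.single_eq_same]

theorem util_mono (hM : UtilityModel μ T ℱ B u) (hV₁ : MemLinfty (ℱ T) μ V₁)
    (hV₂ : MemLinfty (ℱ T) μ V₂) (hle : ∀ᵐ ω ∂μ, V₁ ω ≤ V₂ ω) :
    Util μ T ℱ u B V₁ ≤ Util μ T ℱ u B V₂ := by
  refine hM.util_le hV₁ fun Y hY => ?_
  have hY' := hM.isAlloc_shiftAlloc_single (V' := V₂) hY (hV₂.sub hV₁)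
    (ae_of_all _ fun ω => by ring)
  have hgain := hM.allocVal_add_integral_le_single hY hY' (integrable_zero Ω ℝ μ) <| by
    filter_upwards [hle] with ω hω
    exact sub_nonneg.2 ((hM.strictMono_utility T hM.horizon_mem).monotone (by linarith))
  rw [integral_zero', add_zero] at hgain
  exact hgain.trans (hM.allocVal_le_util hV₂ hY')

theorem util_concave (hM : UtilityModel μ T ℱ B u) (hV₁ : MemLinfty (ℱ T) μ V₁)
    (hV₂ : MemLinfty (ℱ T) μ V₂) {a : ℝ} (ha₀ : 0 ≤ a) (ha₁ : a ≤ 1) :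
    a * Util μ T ℱ u B V₁ + (1 - a) * Util μ T ℱ u B V₂ ≤
      Util μ T ℱ u B (fun ω => a * V₁ ω + (1 - a) * V₂ ω) := by
  refine mul_csSup_add_mul_csSup_le (hM.allocValues_nonempty hV₁) (hM.allocValues_nonempty hV₂)
    ha₀ ha₁ ?_
  rintro _ ⟨Y₁, hY₁, rfl⟩ _ ⟨Y₂, hY₂, rfl⟩
  have hY := hY₁.combo hY₂ a (1 - a)
  refine le_trans ?_ (hM.allocVal_le_util ((hV₁.const_mul a).add (hV₂.const_mul (1 - a))) hY)
  simp only [allocVal, mul_sum, ← sum_add_distrib]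
  refine sum_le_sum fun t ht => ?_
  have h₁ := (hM.integrable_utility hY₁ ht).const_mul a
  have h₂ := (hM.integrable_utility hY₂ ht).const_mul (1 - a)
  rw [← integral_const_mul, ← integral_const_mul, ← integral_add h₁ h₂]
  refine integral_mono (h₁.add h₂) (hM.integrable_utility hY ht) fun ω => ?_
  have hconc := (hM.concaveOn_utility t ht).2 (Set.mem_univ (Y₁ t ω / B t ω))
    (Set.mem_univ (Y₂ t ω / B t ω)) ha₀ (sub_nonneg.2 ha₁) (add_sub_cancel a 1)
  simp only [smul_eq_mul] at hconc
  convert hconc using 2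
  ring

end FiniteMeasure

section ProbabilityMeasure

variable [IsProbabilityMeasure μ]

theorem util_lt_util_add_const (hM : UtilityModel μ T ℱ B u) (hV : MemLinfty (ℱ T) μ V) {c : ℝ}
    (hc : 0 < c) : Util μ T ℱ u B V < Util μ T ℱ u B (fun ω => V ω + c) := by
  obtain ⟨C, hC⟩ := hV.2
  have hT : (0 : ℝ) < T := by exact_mod_cast hM.one_le_horizon
  obtain ⟨δ, hδ, hgain⟩ := exists_pos_le_sum_sub_of_sum_le (nonempty_Icc.2 hM.one_le_horizon)
    hM.strictMono_utility hM.concaveOn_utility C (div_pos hc hT)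
  have hV' := hV.add (memLinfty_const c)
  suffices Util μ T ℱ u B V ≤ Util μ T ℱ u B (fun ω => V ω + c) - δ by linarith
  refine hM.util_le hV fun Y hY => ?_
  have hY' := hM.isAlloc_shiftAlloc (g := fun _ _ => c / T) (V' := fun ω => V ω + c) hY
    (fun _ _ => memLinfty_const _) (ae_of_all _ fun ω => by simp [mul_div_cancel₀ _ hT.ne'])
  have hval := hM.allocVal_add_integral_le hY hY' (integrable_const δ) <| by
    filter_upwards [hY.2, hC] with ω hsum hCω
    exact hgain _ (hsum ▸ (le_abs_self _).trans hCω)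
  simp only [integral_const, probReal_univ, one_smul] at hval
  linarith [hM.allocVal_le_util hV' hY']

theorem sum_utility_zero_add_integral_le_util (hM : UtilityModel μ T ℱ B u)
    (hV : MemLinfty (ℱ T) μ V) {F : Ω → ℝ} (hF : Integrable F μ)
    (hFle : ∀ᵐ ω ∂μ, F ω ≤ u T (V ω) - u T 0) :
    ∑ t ∈ Icc 1 T, u t 0 + ∫ ω, F ω ∂μ ≤ Util μ T ℱ u B V := by
  have hY := hM.isAlloc_shiftAlloc_single isAlloc_zero hV (ae_of_all _ fun _ => zero_add _)
  have hval := hM.allocVal_add_integral_le_single isAlloc_zero hY hF (by simpa using hFle)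
  simp only [allocVal, zero_div, integral_const, probReal_univ, one_smul] at hval
  exact hval.trans (hM.allocVal_le_util hV hY)

theorem sum_utility_le_util_const (hM : UtilityModel μ T ℱ B u) {y : ℕ → ℝ} {m : ℝ}
    (hy : ∑ t ∈ Icc 1 T, y t = m) : ∑ t ∈ Icc 1 T, u t (y t) ≤ Util μ T ℱ u B (fun _ => m) := by
  have hY := hM.isAlloc_shiftAlloc (g := fun t _ => y t) (V' := fun _ => m) isAlloc_zero
    (fun _ _ => memLinfty_const _) (ae_of_all _ fun _ => by simp [hy])
  have hval : allocVal μ T u B (shiftAlloc B (fun _ _ => 0) fun t _ => y t) =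
      ∑ t ∈ Icc 1 T, u t (y t) :=
    sum_congr rfl fun t ht => by simp [hM.shiftAlloc_div ht]
  exact hval ▸ hM.allocVal_le_util (memLinfty_const m) hY

theorem le_supConv (hM : UtilityModel μ T ℱ B u) {y : ℕ → ℝ} {m : ℝ}
    (hy : ∑ t ∈ Icc 1 T, y t = m) : ∑ t ∈ Icc 1 T, u t (y t) ≤ supConv T u m :=
  le_csSup ⟨_, fun _ ⟨_, hy', hx⟩ => hx ▸ hM.sum_utility_le_util_const hy'⟩ ⟨y, hy, rfl⟩

theorem supConv_mono (hM : UtilityModel μ T ℱ B u) : Monotone (supConv T u) := by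
  intro m m' hm
  refine supConv_le hM.one_le_horizon fun y hy => ?_
  refine le_trans ?_ (hM.le_supConv (y := fun t => y t + (m' - m) / T)
    (by rw [sum_Icc_add_div hM.one_le_horizon, hy]; ring))
  refine sum_le_sum fun t ht => (hM.strictMono_utility t ht).monotone ?_
  have : (0 : ℝ) ≤ (m' - m) / T := div_nonneg (sub_nonneg.2 hm) (Nat.cast_nonneg T)
  linarith

theorem exists_pos_supConv_add_le (hM : UtilityModel μ T ℱ B u) :
    ∃ δ > 0, ∀ m ≤ 0, supConv T u m + δ ≤ supConv T u (m + 1) := by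
  have hT : (0 : ℝ) < T := by exact_mod_cast hM.one_le_horizon
  obtain ⟨δ, hδ, hgain⟩ := exists_pos_le_sum_sub_of_sum_le (nonempty_Icc.2 hM.one_le_horizon)
    hM.strictMono_utility hM.concaveOn_utility 0 (one_div_pos.2 hT)
  refine ⟨δ, hδ, fun m hm => ?_⟩
  rw [← le_sub_iff_add_le]
  refine supConv_le hM.one_le_horizon fun y hy => ?_
  have hy' := hM.le_supConv (y := fun t => y t + 1 / T)
    (by rw [sum_Icc_add_div hM.one_le_horizon, hy])
  have := hgain y (hy ▸ hm)
  rw [sum_sub_distrib] at this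
  linarith

theorem tendsto_supConv_atBot (hM : UtilityModel μ T ℱ B u) :
    Tendsto (supConv T u) atBot atBot := by
  obtain ⟨δ, hδ, hstep⟩ := hM.exists_pos_supConv_add_le
  have hchain : ∀ n : ℕ, supConv T u (-n) + n * δ ≤ supConv T u 0 := by
    intro n
    induction n with
    | zero => simp
    | succ n ih =>
      have := hstep (-(n + 1)) (by linarith [(n.cast_nonneg : (0 : ℝ) ≤ n)])
      rw [show -((n : ℝ) + 1) + 1 = -n by ring] at this
      push_cast
      linarith
  refine tendsto_atBot_atBot.2 fun b => ?_
  obtain ⟨n, hn⟩ := exists_nat_ge ((supConv T u 0 - b) / δ)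
  refine ⟨-n, fun m hm => (hM.supConv_mono hm).trans ?_⟩
  linarith [hchain n, (div_le_iff₀ hδ).1 hn]

theorem sum_utility_le_supConv_add (hM : UtilityModel μ T ℱ B u) {M : ℝ}
    (hMu : ∀ z, u T z ≤ M) (x : ℕ → ℝ) :
    ∑ t ∈ Icc 1 T, u t (x t) ≤ supConv T u (∑ t ∈ Icc 1 T, x t - x T) + (M - u T 0) := by
  have hsplit := fun f : ℕ → ℝ => (add_sum_erase (Icc 1 T) f hM.horizon_mem).symm
  have hx := hM.le_supConv (y := Function.update x T 0) (m := ∑ t ∈ Icc 1 T, x t - x T) <| by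
    rw [hsplit x, hsplit, Function.update_self, sum_congr rfl fun t ht =>
      Function.update_of_ne (ne_of_mem_erase ht) _ _]
    ring
  rw [hsplit (fun t => u t (Function.update x T 0 t)), Function.update_self,
    sum_congr rfl fun t ht => by rw [Function.update_of_ne (ne_of_mem_erase ht)]] at hx
  rw [hsplit]
  linarith [hMu (x T)]

theorem exists_util_lt_util_add_indicator (hM : UtilityModel μ T ℱ B u)
    (hu : ¬BddAbove (Set.range (u T))) (hV : MemLinfty (ℱ T) μ V) (hA : MeasurableSet[ℱ T] A)
    (hμA : 0 < μ.real A) :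
    ∃ l > 0, Util μ T ℱ u B V < Util μ T ℱ u B (fun ω => V ω + A.indicator (fun _ => l) ω) := by
  obtain ⟨C, hC⟩ := hV.2
  set c := ∑ t ∈ Icc 1 T, u t 0 - u T 0 + u T (-C)
  obtain ⟨_, ⟨x, rfl⟩, hx⟩ := not_bddAbove_iff.1 hu (u T (-C) + (Util μ T ℱ u B V - c) / μ.real A)
  refine ⟨|x| + |C| + 1, by positivity, ?_⟩
  have hA' : MeasurableSet A := hM.le_ambient T A hA
  set F := fun ω => u T (-C) - u T 0 + A.indicator (fun _ => u T x - u T (-C)) ω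
  have hF : Integrable F μ := (integrable_const _).add ((integrable_const _).indicator hA')
  have hlow := hM.sum_utility_zero_add_integral_le_util
    (hV.add (memLinfty_indicator_const hA (|x| + |C| + 1))) hF <| by
    filter_upwards [hC] with ω hCω
    have hmono := (hM.strictMono_utility T hM.horizon_mem).monotone
    have hVω := (abs_le.1 hCω).1
    by_cases hω : ω ∈ A
    · simp only [F, Set.indicator_of_mem hω]
      linarith [hmono (show x ≤ V ω + (|x| + |C| + 1) by linarith [le_abs_self x, le_abs_self C])]
    · simp only [F, Set.indicator_of_notMem hω]
      linarith [hmono (show -C ≤ V ω + 0 by linarith)]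
  have hint : ∫ ω, F ω ∂μ = u T (-C) - u T 0 + μ.real A * (u T x - u T (-C)) := by
    rw [integral_add (integrable_const _) ((integrable_const _).indicator hA'), integral_const,
      integral_indicator_const _ hA']
    simp
  have := (div_lt_iff₀' hμA).1 (lt_sub_iff_add_lt'.2 hx)
  linarith

theorem util_sub_indicator_lt_of_not_bddAbove (hM : UtilityModel μ T ℱ B u)
    (hu : ¬BddAbove (Set.range (u T))) (hV : MemLinfty (ℱ T) μ V) (hA : MeasurableSet[ℱ T] A)
    (hμA : 0 < μ.real A) {ε : ℝ} (hε : 0 < ε) :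
    Util μ T ℱ u B (fun ω => V ω - A.indicator (fun _ => ε) ω) < Util μ T ℱ u B V := by
  obtain ⟨l, hl, hlt⟩ := hM.exists_util_lt_util_add_indicator hu hV hA hμA
  set a := l / (l + ε)
  have ha₀ : 0 < a := by positivity
  have ha₁ : 1 - a = ε / (l + ε) := by simp only [a]; field_simp; ring
  have h1a : 0 < 1 - a := by rw [ha₁]; positivity
  have hconc := hM.util_concave (hV.sub (memLinfty_indicator_const hA ε))
    (hV.add (memLinfty_indicator_const hA l)) ha₀.le (by linarith)
  have hcomb : (fun ω => a * (V ω - A.indicator (fun _ => ε) ω) +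
      (1 - a) * (V ω + A.indicator (fun _ => l) ω)) = V := by
    ext ω
    rw [ha₁]
    by_cases hω : ω ∈ A
    · simp only [Set.indicator_of_mem hω, a]
      field_simp
      ring
    · simp only [Set.indicator_of_notMem hω, a, sub_zero, add_zero]
      field_simp
  rw [hcomb] at hconc
  by_contra! hge
  nlinarith

theorem allocVal_le_supConv_sub (hM : UtilityModel μ T ℱ B u) {M : ℝ} (hMu : ∀ z, u T z ≤ M)
    (hY : IsAlloc μ T ℱ B W Y) {C : ℝ} (hC : ∀ᵐ ω ∂μ, W ω ≤ C) (n : ℝ) :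
    allocVal μ T u B Y ≤ supConv T u C -
      (supConv T u C - (supConv T u (C - n) + (M - u T 0))) *
        μ.real {ω | n < Y T ω / B T ω} := by
  set S := {ω | n < Y T ω / B T ω}
  set Θ := supConv T u (C - n) + (M - u T 0)
  have hS : MeasurableSet S := measurableSet_lt measurable_const
    (hM.memLinfty_div_discount hM.horizon_mem (hY.memLinfty hM.horizon_mem)).1
  have hint := fun t ht => hM.integrable_utility hY (t := t) ht
  have hbound : ∀ᵐ ω ∂μ, ∑ t ∈ Icc 1 T, u t (Y t ω / B t ω) ≤
      supConv T u C - S.indicator (fun _ => supConv T u C - Θ) ω := by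
    filter_upwards [hY.2, hC] with ω hsum hCω
    by_cases hω : ω ∈ S
    · have hcap := hM.sum_utility_le_supConv_add hMu (fun t => Y t ω / B t ω)
      have hmono := hM.supConv_mono (show ∑ t ∈ Icc 1 T, Y t ω / B t ω - Y T ω / B T ω ≤ C - n by
        rw [hsum]; exact sub_le_sub hCω hω.le)
      rw [Set.indicator_of_mem hω]
      linarith
    · rw [Set.indicator_of_notMem hω, sub_zero]
      exact (hM.le_supConv hsum).trans (hM.supConv_mono hCω)
  calc allocVal μ T u B Y = ∫ ω, ∑ t ∈ Icc 1 T, u t (Y t ω / B t ω) ∂μ :=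
        (integral_finsetSum _ hint).symm
    _ ≤ ∫ ω, (supConv T u C - S.indicator (fun _ => supConv T u C - Θ) ω) ∂μ :=
        integral_mono_ae (integrable_finsetSum _ hint)
          ((integrable_const _).sub ((integrable_const _).indicator hS)) hbound
    _ = supConv T u C - (supConv T u C - Θ) * μ.real S := by
        rw [integral_sub (integrable_const _) ((integrable_const _).indicator hS), integral_const,
          integral_indicator_const _ hS]
        simp [mul_comm]

theorem exists_measureReal_lt_of_lt_allocVal (hM : UtilityModel μ T ℱ B u) {M : ℝ}
    (hMu : ∀ z, u T z ≤ M) (C L : ℝ) {q : ℝ} (hq : 0 < q) :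
    ∃ n : ℝ, ∀ W Y, IsAlloc μ T ℱ B W Y → (∀ᵐ ω ∂μ, W ω ≤ C) → L < allocVal μ T u B Y →
      μ.real {ω | n < Y T ω / B T ω} < q := by
  set P := supConv T u C
  obtain ⟨K, hK⟩ := tendsto_atBot_atBot.1 hM.tendsto_supConv_atBot
    (min P (P - (P - L) / q) - (M - u T 0))
  refine ⟨C - K, fun W Y hY hC hL => ?_⟩
  have hval := hM.allocVal_le_supConv_sub hMu hY hC (C - K)
  rw [sub_sub_cancel] at hval
  have hΘ := hK K le_rfl
  have h₁ : 0 ≤ P - (supConv T u K + (M - u T 0)) := by linarith [min_le_left P (P - (P - L) / q)]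
  have h₂ : P - L ≤ (P - (supConv T u K + (M - u T 0))) * q :=
    (div_le_iff₀ hq).1 (by linarith [min_le_right P (P - (P - L) / q)])
  by_contra! hge
  nlinarith [mul_le_mul_of_nonneg_left hge h₁]

theorem allocVal_add_mul_measureReal_le_util (hM : UtilityModel μ T ℱ B u)
    (hV : MemLinfty (ℱ T) μ V) (hA : MeasurableSet[ℱ T] A) {ε : ℝ} (hε : 0 < ε)
    (hY : IsAlloc μ T ℱ B (fun ω => V ω - A.indicator (fun _ => ε) ω) Y) (n : ℝ) :
    allocVal μ T u B Y + (u T (n + ε) - u T n) * μ.real (A \ {ω | n < Y T ω / B T ω}) ≤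
      Util μ T ℱ u B V := by
  set S := {ω | n < Y T ω / B T ω}
  have hS : MeasurableSet S := measurableSet_lt measurable_const
    (hM.memLinfty_div_discount hM.horizon_mem (hY.memLinfty hM.horizon_mem)).1
  have hAS : MeasurableSet (A \ S) := (hM.le_ambient T A hA).diff hS
  have hY' := hM.isAlloc_shiftAlloc_single (V' := V) hY (memLinfty_indicator_const hA ε)
    (ae_of_all _ fun ω => sub_add_cancel _ _)
  have hval := hM.allocVal_add_integral_le_single hY hY'
    ((integrable_const (u T (n + ε) - u T n)).indicator hAS) <| ae_of_all _ fun ω => by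
      by_cases hω : ω ∈ A \ S
      · rw [Set.indicator_of_mem hω, Set.indicator_of_mem hω.1]
        exact (hM.concaveOn_utility T hM.horizon_mem).sub_le_sub_of_le (not_lt.1 hω.2) hε.le
      · rw [Set.indicator_of_notMem hω, sub_nonneg]
        exact (hM.strictMono_utility T hM.horizon_mem).monotone
          (le_add_of_nonneg_right (Set.indicator_nonneg (fun _ _ => hε.le) ω))
  rw [integral_indicator_const _ hAS, smul_eq_mul, mul_comm] at hval
  exact hval.trans (hM.allocVal_le_util hV hY')

theorem util_sub_indicator_lt_of_bddAbove (hM : UtilityModel μ T ℱ B u)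
    (hu : BddAbove (Set.range (u T))) (hV : MemLinfty (ℱ T) μ V) (hA : MeasurableSet[ℱ T] A)
    (hμA : 0 < μ.real A) {ε : ℝ} (hε : 0 < ε) :
    Util μ T ℱ u B (fun ω => V ω - A.indicator (fun _ => ε) ω) < Util μ T ℱ u B V := by
  obtain ⟨M, hMu⟩ := hu
  obtain ⟨C, hC⟩ := hV.2
  set s := Util μ T ℱ u B (fun ω => V ω - A.indicator (fun _ => ε) ω)
  have hCm : ∀ᵐ ω ∂μ, V ω - A.indicator (fun _ => ε) ω ≤ C := by
    filter_upwards [hC] with ω hCω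
    linarith [le_abs_self (V ω), Set.indicator_nonneg (fun _ _ => hε.le) ω (s := A)]
  obtain ⟨n, hn⟩ := hM.exists_measureReal_lt_of_lt_allocVal (fun z => hMu ⟨z, rfl⟩) C (s - 1)
    (half_pos hμA)
  set γ := u T (n + ε) - u T n
  have hγ : 0 < γ := sub_pos.2 (hM.strictMono_utility T hM.horizon_mem (lt_add_of_pos_right n hε))
  set η := min 1 (γ * (μ.real A / 2))
  have hη : 0 < η := lt_min one_pos (by positivity)
  obtain ⟨_, ⟨Y, hY, rfl⟩, hYs⟩ := exists_lt_of_lt_csSup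
    (hM.allocValues_nonempty (hV.sub (memLinfty_indicator_const hA ε))) (sub_lt_self s hη)
  have hS := hn _ Y hY hCm (by linarith [min_le_left 1 (γ * (μ.real A / 2))])
  have hAS : μ.real A / 2 < μ.real (A \ {ω | n < Y T ω / B T ω}) := by
    linarith [le_measureReal_sdiff (μ := μ) (s₁ := A) (s₂ := {ω | n < Y T ω / B T ω})]
  have hgain := hM.allocVal_add_mul_measureReal_le_util hV hA hε hY n
  linarith [mul_lt_mul_of_pos_left hAS hγ, min_le_right 1 (γ * (μ.real A / 2))]

theorem util_sub_indicator_lt (hM : UtilityModel μ T ℱ B u) (hV : MemLinfty (ℱ T) μ V)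
    (hA : MeasurableSet[ℱ T] A) (hμA : 0 < μ A) {ε : ℝ} (hε : 0 < ε) :
    Util μ T ℱ u B (fun ω => V ω - A.indicator (fun _ => ε) ω) < Util μ T ℱ u B V := by
  have hμA' : 0 < μ.real A := ENNReal.toReal_pos hμA.ne' (measure_ne_top μ A)
  by_cases hu : BddAbove (Set.range (u T))
  · exact hM.util_sub_indicator_lt_of_bddAbove hu hV hA hμA' hε
  · exact hM.util_sub_indicator_lt_of_not_bddAbove hu hV hA hμA' hε

variable {w : ℝ} {H : (Ω → ℝ) → ℝ}

theorem price_lt_price (hM : UtilityModel μ T ℱ B u)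
    (hH : ∀ V, MemLinfty (ℱ T) μ V →
      Util μ T ℱ u B (fun ω => w + H V - V ω) = Util μ T ℱ u B (fun _ => w))
    (hW : MemLinfty (ℱ T) μ W) (hZ : MemLinfty (ℱ T) μ Z) (hle : ∀ᵐ ω ∂μ, Z ω ≤ W ω)
    (hlt : 0 < μ {ω | Z ω < W ω}) : H Z < H W := by
  by_contra! hHWZ
  obtain ⟨ε, hε, hμA⟩ := exists_pos_measure_add_le hlt
  set A := {ω | Z ω + ε ≤ W ω}
  have hA : MeasurableSet[ℱ T] A := measurableSet_le (hZ.1.add measurable_const) hW.1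
  have hV := (memLinfty_const (w + H Z)).sub hZ
  have hstrict := hM.util_sub_indicator_lt hV hA hμA hε
  have hmono := hM.util_mono ((memLinfty_const (w + H W)).sub hW)
    (hV.sub (memLinfty_indicator_const hA ε)) <| by
    filter_upwards [hle] with ω hω
    by_cases hωA : ω ∈ A
    · rw [Set.indicator_of_mem hωA]
      linarith [show Z ω + ε ≤ W ω from hωA]
    · rw [Set.indicator_of_notMem hωA]
      linarith
  linarith [hH W hW, hH Z hZ]

theorem price_convex (hM : UtilityModel μ T ℱ B u)
    (hH : ∀ V, MemLinfty (ℱ T) μ V →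
      Util μ T ℱ u B (fun ω => w + H V - V ω) = Util μ T ℱ u B (fun _ => w))
    (hW : MemLinfty (ℱ T) μ W) (hZ : MemLinfty (ℱ T) μ Z) {a : ℝ} (ha₀ : 0 ≤ a) (ha₁ : a ≤ 1) :
    H (fun ω => a * W ω + (1 - a) * Z ω) ≤ a * H W + (1 - a) * H Z := by
  by_contra! hgt
  set X := fun ω => a * W ω + (1 - a) * Z ω
  set p := a * H W + (1 - a) * H Z
  have hX : MemLinfty (ℱ T) μ X := (hW.const_mul a).add (hZ.const_mul (1 - a))
  have hconc := hM.util_concave ((memLinfty_const (w + H W)).sub hW)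
    ((memLinfty_const (w + H Z)).sub hZ) ha₀ ha₁
  have hstrict := hM.util_lt_util_add_const ((memLinfty_const (w + p)).sub hX) (sub_pos.2 hgt)
  have e₁ : (fun ω => a * (w + H W - W ω) + (1 - a) * (w + H Z - Z ω)) =
      fun ω => w + p - X ω := by
    ext ω; simp only [X, p]; ring
  have e₂ : (fun ω => w + p - X ω + (H X - p)) = fun ω => w + H X - X ω := by ext ω; ring
  rw [e₁, hH W hW, hH Z hZ] at hconc
  rw [e₂, hH X hX] at hstrict
  linarith

end ProbabilityMeasure

end UtilityModel
/-- Properties of the indifference price functional (Proposition 2.7):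
strict monotonicity and convexity. -/
theorem indifference_price_strictMono_convex
    {Ω : Type*} [mΩ : MeasurableSpace Ω] (μ : Measure Ω) [IsProbabilityMeasure μ]
    (T : ℕ) (hT : 1 ≤ T)
    (ℱ : ℕ → MeasurableSpace Ω) (hℱmono : Monotone ℱ) (hℱle : ∀ t, ℱ t ≤ mΩ)
    (r : ℕ → Ω → ℝ)
    (hr_meas : ∀ t ∈ Finset.Icc 1 T, Measurable[ℱ (t - 1)] (r t))
    (hr_nonneg : ∀ t ∈ Finset.Icc 1 T, ∀ ω, 0 ≤ r t ω)
    (hr_bdd : ∀ t ∈ Finset.Icc 1 T, ∃ C : ℝ, ∀ ω, r t ω ≤ C)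
    (B : ℕ → Ω → ℝ) (hB : ∀ t ω, B t ω = ∏ k ∈ Finset.Icc 1 t, (1 + r k ω))
    (u : ℕ → ℝ → ℝ)
    (hu_conc : ∀ t ∈ Finset.Icc 1 T, StrictConcaveOn ℝ (Set.univ : Set ℝ) (u t))
    (hu_diff : ∀ t ∈ Finset.Icc 1 T, ContDiff ℝ 1 (u t))
    (hu_deriv : ∀ t ∈ Finset.Icc 1 T, ∀ x : ℝ, 0 < deriv (u t) x)
    (hUfin : ∀ V : Ω → ℝ, Measurable[ℱ T] V → (∃ C : ℝ, ∀ᵐ ω ∂μ, |V ω| ≤ C) →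
      BddAbove {s : ℝ | ∃ Y, IsAlloc μ T ℱ B V Y ∧ s = allocVal μ T u B Y})
    (w : ℝ) (H : (Ω → ℝ) → ℝ)
    (hH : ∀ V : Ω → ℝ, Measurable[ℱ T] V → (∃ C : ℝ, ∀ᵐ ω ∂μ, |V ω| ≤ C) →
      Util μ T ℱ u B (fun ω => w + H V - V ω) = Util μ T ℱ u B (fun _ => w))
    (W Z : Ω → ℝ)
    (hWmeas : Measurable[ℱ T] W) (hWbdd : ∃ C : ℝ, ∀ᵐ ω ∂μ, |W ω| ≤ C)
    (hZmeas : Measurable[ℱ T] Z) (hZbdd : ∃ C : ℝ, ∀ᵐ ω ∂μ, |Z ω| ≤ C) :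
    ((∀ᵐ ω ∂μ, Z ω ≤ W ω) → 0 < μ {ω | Z ω < W ω} → H Z < H W) ∧
    (∀ a : ℝ, 0 ≤ a → a ≤ 1 →
      H (fun ω => a * W ω + (1 - a) * Z ω) ≤ a * H W + (1 - a) * H Z) := by
  have hIcc : ∀ t ∈ Icc 1 T, Icc 1 t ⊆ Icc 1 T := fun t ht => Icc_subset_Icc_right (mem_Icc.1 ht).2
  have hM : UtilityModel μ T ℱ B u :=
    { one_le_horizon := hT
      le_ambient := hℱle
      memLinfty_discount := fun t ht => by
        simpa only [← hB] using memLinfty_prod_one_add hℱmono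
          (fun k hk => hr_meas k (hIcc t ht hk)) (fun k hk => hr_nonneg k (hIcc t ht hk))
          (fun k hk => hr_bdd k (hIcc t ht hk))
      one_le_discount := fun t ht ω =>
        hB t ω ▸ one_le_prod fun k hk => le_add_of_nonneg_right (hr_nonneg k (hIcc t ht hk) ω)
      strictMono_utility := fun t ht => strictMono_of_deriv_pos (hu_deriv t ht)
      concaveOn_utility := fun t ht => (hu_conc t ht).concaveOn
      continuous_utility := fun t ht => (hu_diff t ht).continuous
      bddAbove_allocValues := fun V hV => hUfin V hV.1 hV.2 }
  have hH' : ∀ V, MemLinfty (ℱ T) μ V → _ := fun V hV => hH V hV.1 hV.2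
  exact ⟨hM.price_lt_price hH' ⟨hWmeas, hWbdd⟩ ⟨hZmeas, hZbdd⟩,
    fun a => hM.price_convex hH' ⟨hWmeas, hWbdd⟩ ⟨hZmeas, hZbdd⟩⟩
end
end

section
/- Let λ = (λ_1,...,λ_T) ∈ ℝ_+^T \ {0}. (a) If (X_t)_{t∈𝕋} ∈ A(W) solves Problem P_λ (i.e. maximizes ∑_{t∈𝕋} λ_t E[u_t(Ỹ_t)] over (Y_t) ∈ A(W)), then (λ_t u_t'(X̃_t))_{t∈𝕋} is an (F_t)-martingale. (b) If Problem P_λ has a solution, then λ_t > 0 for every t ∈ 𝕋. -/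
/-!
Perturbing an optimal allocation in discounted terms, `Ỹ_k = X̃_k + ε V_k` with `V` adapted,
bounded and `∑_k V_k = 0`, keeps it admissible, so the derivative of the objective at `ε = 0`
vanishes: `∑_k λ_k E[u_k'(X̃_k) V_k] = 0`. Taking `V = 1_A` at date `s`, `V = -1_A` at date
`t ≥ s` and `V = 0` otherwise, for `A ∈ F_s`, gives `E[λ_s u_s'(X̃_s) 1_A] = E[λ_t u_t'(X̃_t) 1_A]`,
which is the martingale property. With `A = Ω` all the products `λ_t E[u_t'(X̃_t)]` coincide;
one of them is positive and each `E[u_t'(X̃_t)]` is positive, so every `λ_t` is.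
-/

open MeasureTheory Finset Real

noncomputable section

section Calculus

variable {Ω : Type*} [MeasurableSpace Ω] {μ : Measure Ω} [IsFiniteMeasure μ]

theorem Continuous.integrable_comp_of_ae_abs_le {f : ℝ → ℝ} (hf : Continuous f)
    {g : Ω → ℝ} (hg : AEStronglyMeasurable g μ) {M : ℝ} (hgM : ∀ᵐ ω ∂μ, |g ω| ≤ M) :
    Integrable (fun ω => f (g ω)) μ := by
  obtain ⟨K, hK⟩ := (isCompact_Icc (a := -M) (b := M)).exists_bound_of_continuousOn
    hf.continuousOn
  refine Integrable.of_bound (hf.comp_aestronglyMeasurable hg) K ?_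
  filter_upwards [hgM] with ω hω using hK _ (abs_le.mp hω)

theorem hasDerivAt_integral_comp_add_mul {f : ℝ → ℝ} (hf : ContDiff ℝ 1 f)
    {g V : Ω → ℝ} (hg : AEStronglyMeasurable g μ) (hV : AEStronglyMeasurable V μ) {M C : ℝ}
    (hgM : ∀ᵐ ω ∂μ, |g ω| ≤ M) (hVC : ∀ᵐ ω ∂μ, |V ω| ≤ C) :
    HasDerivAt (fun ε => ∫ ω, f (g ω + ε * V ω) ∂μ)
      (∫ ω, deriv f (g ω) * V ω ∂μ) 0 := by
  have hf' : Continuous (deriv f) := hf.continuous_deriv le_rfl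
  obtain ⟨K, hK⟩ := (isCompact_Icc (a := -(M + C)) (b := M + C)).exists_bound_of_continuousOn
    hf'.continuousOn
  have hmem : ∀ᵐ ω ∂μ, ∀ ε ∈ Metric.ball (0 : ℝ) 1,
      g ω + ε * V ω ∈ Set.Icc (-(M + C)) (M + C) := by
    filter_upwards [hgM, hVC] with ω hgω hVω ε hε
    have hε1 : |ε| < 1 := mem_ball_zero_iff.mp hε
    have hεV : |ε * V ω| ≤ C := by
      rw [abs_mul]; nlinarith [abs_nonneg ε, abs_nonneg (V ω)]
    exact abs_le.mp ((abs_add_le _ _).trans (add_le_add hgω hεV))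
  have hdom := hasDerivAt_integral_of_dominated_loc_of_deriv_le
    (F := fun ε ω => f (g ω + ε * V ω)) (F' := fun ε ω => deriv f (g ω + ε * V ω) * V ω)
    (bound := fun _ => K * C) (Metric.ball_mem_nhds 0 one_pos)
    (Filter.Eventually.of_forall fun ε =>
      hf.continuous.comp_aestronglyMeasurable (hg.add (hV.const_mul ε)))
    (by simpa using hf.continuous.integrable_comp_of_ae_abs_le hg hgM)
    (by simpa using (hf'.comp_aestronglyMeasurable hg).fun_mul hV) ?_ (integrable_const _) ?_
  · simpa using hdom.2
  · filter_upwards [hmem, hVC] with ω hω hVω ε hε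
    have hKω := hK _ (hω ε hε)
    rw [norm_mul, Real.norm_eq_abs (V ω)]
    exact mul_le_mul hKω hVω (abs_nonneg _) ((norm_nonneg _).trans hKω)
  · refine Filter.Eventually.of_forall fun ω ε _ => ?_
    have hlin : HasDerivAt (fun ε => g ω + ε * V ω) (V ω) ε := by
      simpa using ((hasDerivAt_id ε).mul_const (V ω)).const_add (g ω)
    exact ((hf.differentiable one_ne_zero _).hasDerivAt).comp ε hlin

theorem integral_comp_pos {f : ℝ → ℝ} (hf : Continuous f) (hpos : ∀ x, 0 < f x) [NeZero μ]
    {g : Ω → ℝ} (hg : AEStronglyMeasurable g μ) {M : ℝ} (hgM : ∀ᵐ ω ∂μ, |g ω| ≤ M) :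
    0 < ∫ ω, f (g ω) ∂μ := by
  rw [integral_pos_iff_support_of_nonneg (fun ω => (hpos _).le)
    (hf.integrable_comp_of_ae_abs_le hg hgM)]
  simp [Function.support, (hpos _).ne', NeZero.ne μ]

end Calculus

section Discount

variable {Ω : Type*} {T : ℕ} {r B : ℕ → Ω → ℝ}

theorem one_le_discount (hr_nonneg : ∀ t ∈ Icc 1 T, ∀ ω, 0 ≤ r t ω)
    (hB : ∀ t ω, B t ω = ∏ k ∈ Icc 1 t, (1 + r k ω)) {t : ℕ} (ht : t ≤ T) (ω : Ω) :
    1 ≤ B t ω := by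
  rw [hB]
  exact one_le_prod fun k hk => le_add_of_nonneg_right
    (hr_nonneg k (Icc_subset_Icc_right ht hk) ω)

theorem exists_discount_le (hr_nonneg : ∀ t ∈ Icc 1 T, ∀ ω, 0 ≤ r t ω)
    (hr_bdd : ∀ t ∈ Icc 1 T, ∃ C : ℝ, ∀ ω, r t ω ≤ C)
    (hB : ∀ t ω, B t ω = ∏ k ∈ Icc 1 t, (1 + r k ω)) {t : ℕ} (ht : t ≤ T) :
    ∃ D : ℝ, ∀ ω, B t ω ≤ D := by
  choose! C hC using hr_bdd
  refine ⟨∏ k ∈ Icc 1 t, (1 + C k), fun ω => ?_⟩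
  rw [hB]
  refine prod_le_prod (fun k hk => ?_) (fun k hk => ?_)
  · linarith [hr_nonneg k (Icc_subset_Icc_right ht hk) ω]
  · linarith [hC k (Icc_subset_Icc_right ht hk) ω]

theorem measurable_discount {ℱ : ℕ → MeasurableSpace Ω} (hℱmono : Monotone ℱ)
    (hr_meas : ∀ t ∈ Icc 1 T, Measurable[ℱ (t - 1)] (r t))
    (hB : ∀ t ω, B t ω = ∏ k ∈ Icc 1 t, (1 + r k ω)) {t : ℕ} (ht : t ≤ T) :
    Measurable[ℱ t] (B t) := by
  rw [show B t = fun ω => ∏ k ∈ Icc 1 t, (1 + r k ω) from funext (hB t)]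
  refine measurable_prod _ fun k hk => measurable_const.add ?_
  exact (hr_meas k (Icc_subset_Icc_right ht hk)).mono (hℱmono (by grind)) le_rfl

end Discount

/-- The objective of Problem `P_λ`. -/
def weightedAllocVal {Ω : Type*} [MeasurableSpace Ω] (μ : Measure Ω) (T : ℕ) (lam : ℕ → ℝ)
    (u : ℕ → ℝ → ℝ) (B Y : ℕ → Ω → ℝ) : ℝ :=
  ∑ t ∈ Icc 1 T, lam t * ∫ ω, u t (Y t ω / B t ω) ∂μ

namespace IsAlloc

variable {Ω : Type*} [mΩ : MeasurableSpace Ω] {μ : Measure Ω} {T : ℕ}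
  {ℱ : ℕ → MeasurableSpace Ω} {B X : ℕ → Ω → ℝ}

theorem exists_ae_abs_div_le_s6 (hX : IsAlloc μ T ℱ B W X)
    (hB1 : ∀ k ∈ Icc 1 T, ∀ ω, 1 ≤ B k ω) {k : ℕ} (hk : k ∈ Icc 1 T) :
    ∃ M, ∀ᵐ ω ∂μ, |X k ω / B k ω| ≤ M := by
  obtain ⟨M, hM⟩ := (hX.1 k hk).2
  refine ⟨M, ?_⟩
  filter_upwards [hM] with ω hω
  rw [abs_div, abs_of_pos (one_pos.trans_le (hB1 k hk ω))]
  exact (div_le_self (abs_nonneg _) (hB1 k hk ω)).trans hω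

theorem integrable_comp_div [IsFiniteMeasure μ] (hℱle : ∀ t, ℱ t ≤ mΩ)
    (hB1 : ∀ k ∈ Icc 1 T, ∀ ω, 1 ≤ B k ω) (hBmeas : ∀ k ∈ Icc 1 T, Measurable[ℱ k] (B k))
    (hX : IsAlloc μ T ℱ B W X) {f : ℝ → ℝ} (hf : Continuous f) {k : ℕ} (hk : k ∈ Icc 1 T) :
    Integrable (fun ω => f (X k ω / B k ω)) μ :=
  hf.integrable_comp_of_ae_abs_le
    (((hX.1 k hk).1.div (hBmeas k hk)).mono (hℱle k) le_rfl).aestronglyMeasurable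
    (hX.exists_ae_abs_div_le_s6 hB1 hk).choose_spec

theorem integral_comp_div_pos [IsProbabilityMeasure μ] (hℱle : ∀ t, ℱ t ≤ mΩ)
    (hB1 : ∀ k ∈ Icc 1 T, ∀ ω, 1 ≤ B k ω) (hBmeas : ∀ k ∈ Icc 1 T, Measurable[ℱ k] (B k))
    (hX : IsAlloc μ T ℱ B W X) {f : ℝ → ℝ} (hf : Continuous f) (hpos : ∀ x, 0 < f x) {k : ℕ}
    (hk : k ∈ Icc 1 T) : 0 < ∫ ω, f (X k ω / B k ω) ∂μ :=
  integral_comp_pos hf hpos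
    (((hX.1 k hk).1.div (hBmeas k hk)).mono (hℱle k) le_rfl).aestronglyMeasurable
    (hX.exists_ae_abs_div_le_s6 hB1 hk).choose_spec

theorem add_mul_of_sum_eq_zero (hX : IsAlloc μ T ℱ B W X)
    (hB1 : ∀ k ∈ Icc 1 T, ∀ ω, 1 ≤ B k ω) (hBmeas : ∀ k ∈ Icc 1 T, Measurable[ℱ k] (B k))
    (hBbdd : ∀ k ∈ Icc 1 T, ∃ D, ∀ ω, B k ω ≤ D) {V : ℕ → Ω → ℝ}
    (hVmeas : ∀ k ∈ Icc 1 T, Measurable[ℱ k] (V k))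
    (hVbdd : ∀ k ∈ Icc 1 T, ∃ C, ∀ᵐ ω ∂μ, |V k ω| ≤ C)
    (hVsum : ∀ᵐ ω ∂μ, ∑ k ∈ Icc 1 T, V k ω = 0) :
    IsAlloc μ T ℱ B W (fun k ω => X k ω + B k ω * V k ω) := by
  refine ⟨fun k hk => ⟨(hX.1 k hk).1.add ((hBmeas k hk).mul (hVmeas k hk)), ?_⟩, ?_⟩
  · obtain ⟨M, hM⟩ := (hX.1 k hk).2
    obtain ⟨D, hD⟩ := hBbdd k hk
    obtain ⟨C, hC⟩ := hVbdd k hk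
    refine ⟨M + D * C, ?_⟩
    filter_upwards [hM, hC] with ω hXω hVω
    have hBω : |B k ω| ≤ D := by
      rw [abs_of_pos (one_pos.trans_le (hB1 k hk ω))]; exact hD ω
    calc |X k ω + B k ω * V k ω| ≤ |X k ω| + |B k ω| * |V k ω| := by
          rw [← abs_mul]; exact abs_add_le _ _
      _ ≤ M + D * C :=
          add_le_add hXω (mul_le_mul hBω hVω (abs_nonneg _) ((abs_nonneg _).trans hBω))
  · filter_upwards [hX.2, hVsum] with ω hXω hVω
    calc ∑ k ∈ Icc 1 T, (X k ω + B k ω * V k ω) / B k ω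
        = ∑ k ∈ Icc 1 T, (X k ω / B k ω + V k ω) := sum_congr rfl fun k hk => by
          rw [add_div, mul_div_cancel_left₀ _ (one_pos.trans_le (hB1 k hk ω)).ne']
      _ = W ω := by rw [sum_add_distrib, hXω, hVω, add_zero]

theorem sum_integral_deriv_mul_eq_zero [IsFiniteMeasure μ] (hℱle : ∀ t, ℱ t ≤ mΩ)
    (hB1 : ∀ k ∈ Icc 1 T, ∀ ω, 1 ≤ B k ω)
    (hBmeas : ∀ k ∈ Icc 1 T, Measurable[ℱ k] (B k)) (hBbdd : ∀ k ∈ Icc 1 T, ∃ D, ∀ ω, B k ω ≤ D)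
    {u : ℕ → ℝ → ℝ} (hu : ∀ k ∈ Icc 1 T, ContDiff ℝ 1 (u k)) {lam : ℕ → ℝ}
    (hX : IsAlloc μ T ℱ B W X)
    (hXopt : ∀ Y, IsAlloc μ T ℱ B W Y →
      weightedAllocVal μ T lam u B Y ≤ weightedAllocVal μ T lam u B X)
    {V : ℕ → Ω → ℝ} (hVmeas : ∀ k ∈ Icc 1 T, Measurable[ℱ k] (V k))
    (hVbdd : ∀ k ∈ Icc 1 T, ∃ C, ∀ᵐ ω ∂μ, |V k ω| ≤ C)
    (hVsum : ∀ᵐ ω ∂μ, ∑ k ∈ Icc 1 T, V k ω = 0) :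
    ∑ k ∈ Icc 1 T, lam k * ∫ ω, deriv (u k) (X k ω / B k ω) * V k ω ∂μ = 0 := by
  set φ : ℝ → ℝ := fun ε => ∑ k ∈ Icc 1 T, lam k * ∫ ω, u k (X k ω / B k ω + ε * V k ω) ∂μ
  have hφ : ∀ ε, φ ε = weightedAllocVal μ T lam u B (fun k ω => X k ω + B k ω * (ε * V k ω)) :=
    fun ε => sum_congr rfl fun k hk => by
      simp only [add_div, mul_div_cancel_left₀ _ (one_pos.trans_le (hB1 k hk _)).ne']
  have hmax : IsLocalMax φ 0 := Filter.Eventually.of_forall fun ε => by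
    have hεV : ∀ k ∈ Icc 1 T, ∃ C, ∀ᵐ ω ∂μ, |ε * V k ω| ≤ C := fun k hk => by
      obtain ⟨C, hC⟩ := hVbdd k hk
      refine ⟨|ε| * C, ?_⟩
      filter_upwards [hC] with ω hω
      rw [abs_mul]; exact mul_le_mul_of_nonneg_left hω (abs_nonneg ε)
    rw [hφ, show φ 0 = weightedAllocVal μ T lam u B X by simp [φ, weightedAllocVal]]
    refine hXopt _ (hX.add_mul_of_sum_eq_zero hB1 hBmeas hBbdd
      (fun k hk => (hVmeas k hk).const_mul ε) hεV ?_)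
    filter_upwards [hVsum] with ω hω
    rw [← mul_sum, hω, mul_zero]
  refine hmax.hasDerivAt_eq_zero (HasDerivAt.fun_sum fun k hk => (HasDerivAt.const_mul _ ?_))
  obtain ⟨M, hM⟩ := hX.exists_ae_abs_div_le_s6 hB1 hk
  obtain ⟨C, hC⟩ := hVbdd k hk
  exact hasDerivAt_integral_comp_add_mul (hu k hk)
    ((((hX.1 k hk).1.div (hBmeas k hk)).mono (hℱle k) le_rfl).aestronglyMeasurable)
    (((hVmeas k hk).mono (hℱle k) le_rfl).aestronglyMeasurable) hM hC

theorem mul_setIntegral_deriv_eq [IsFiniteMeasure μ] (hℱmono : Monotone ℱ)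
    (hℱle : ∀ t, ℱ t ≤ mΩ) (hB1 : ∀ k ∈ Icc 1 T, ∀ ω, 1 ≤ B k ω)
    (hBmeas : ∀ k ∈ Icc 1 T, Measurable[ℱ k] (B k)) (hBbdd : ∀ k ∈ Icc 1 T, ∃ D, ∀ ω, B k ω ≤ D)
    {u : ℕ → ℝ → ℝ} (hu : ∀ k ∈ Icc 1 T, ContDiff ℝ 1 (u k)) {lam : ℕ → ℝ}
    (hX : IsAlloc μ T ℱ B W X)
    (hXopt : ∀ Y, IsAlloc μ T ℱ B W Y →
      weightedAllocVal μ T lam u B Y ≤ weightedAllocVal μ T lam u B X)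
    {s t : ℕ} (hs : s ∈ Icc 1 T) (ht : t ∈ Icc 1 T) (hst : s ≤ t) {A : Set Ω}
    (hA : MeasurableSet[ℱ s] A) :
    lam s * ∫ ω in A, deriv (u s) (X s ω / B s ω) ∂μ =
      lam t * ∫ ω in A, deriv (u t) (X t ω / B t ω) ∂μ := by
  set c : ℕ → ℝ := fun k => (if k = s then 1 else 0) - (if k = t then 1 else 0)
  have hVmeas : ∀ k ∈ Icc 1 T, Measurable[ℱ k] fun ω => c k * A.indicator 1 ω := by
    intro k _
    by_cases hks : k = s
    · subst hks; exact (measurable_const.indicator hA).const_mul _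
    by_cases hkt : k = t
    · subst hkt; exact (measurable_const.indicator (hℱmono hst _ hA)).const_mul _
    simp [c, hks, hkt]
  have hVbdd : ∀ k ∈ Icc 1 T, ∃ C, ∀ᵐ ω ∂μ, |c k * A.indicator 1 ω| ≤ C := fun k _ =>
    ⟨|c k|, Filter.Eventually.of_forall fun ω => by
      rw [abs_mul]
      exact mul_le_of_le_one_right (abs_nonneg _) (by by_cases h : ω ∈ A <;> simp [h])⟩
  have hVsum : ∀ᵐ ω ∂μ, ∑ k ∈ Icc 1 T, c k * A.indicator 1 ω = 0 :=
    Filter.Eventually.of_forall fun ω => by simp [c, ← sum_mul, sum_sub_distrib, hs, ht]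
  have hfoc := hX.sum_integral_deriv_mul_eq_zero hℱle hB1 hBmeas hBbdd hu hXopt hVmeas hVbdd hVsum
  have hind : ∀ k, ∫ ω, deriv (u k) (X k ω / B k ω) * (c k * A.indicator 1 ω) ∂μ =
      c k * ∫ ω in A, deriv (u k) (X k ω / B k ω) ∂μ := fun k => by
    rw [← integral_const_mul, ← integral_indicator (hℱle s _ hA)]
    congr 1; ext ω; by_cases h : ω ∈ A <;> simp [h, mul_comm]
  simp only [hind] at hfoc
  simp only [c, sub_mul, ite_mul, one_mul, zero_mul, mul_sub, mul_ite, mul_zero, sum_sub_distrib,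
    sum_ite_eq', hs, ht, ↓reduceIte] at hfoc
  linarith

end IsAlloc

theorem problemLambda_solution_martingale_and_pos_general
    {Ω : Type*} [mΩ : MeasurableSpace Ω] (μ : Measure Ω) [IsProbabilityMeasure μ]
    (T : ℕ)
    (ℱ : ℕ → MeasurableSpace Ω) (hℱmono : Monotone ℱ) (hℱle : ∀ t, ℱ t ≤ mΩ)
    (r : ℕ → Ω → ℝ)
    (hr_meas : ∀ t ∈ Finset.Icc 1 T, Measurable[ℱ (t - 1)] (r t))
    (hr_nonneg : ∀ t ∈ Finset.Icc 1 T, ∀ ω, 0 ≤ r t ω)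
    (hr_bdd : ∀ t ∈ Finset.Icc 1 T, ∃ C : ℝ, ∀ ω, r t ω ≤ C)
    (B : ℕ → Ω → ℝ) (hB : ∀ t ω, B t ω = ∏ k ∈ Finset.Icc 1 t, (1 + r k ω))
    (u : ℕ → ℝ → ℝ)
    (hu_diff : ∀ t ∈ Finset.Icc 1 T, ContDiff ℝ 1 (u t))
    (hu_deriv : ∀ t ∈ Finset.Icc 1 T, ∀ x : ℝ, 0 < deriv (u t) x)
    (W : Ω → ℝ)
    (lam : ℕ → ℝ)
    (hlam_nonneg : ∀ t ∈ Finset.Icc 1 T, 0 ≤ lam t)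
    (hlam_ne : ∃ t ∈ Finset.Icc 1 T, lam t ≠ 0)
    (X : ℕ → Ω → ℝ) (hX : IsAlloc μ T ℱ B W X)
    (hXopt : ∀ Y, IsAlloc μ T ℱ B W Y →
      ∑ t ∈ Finset.Icc 1 T, lam t * ∫ ω, u t (Y t ω / B t ω) ∂μ ≤
        ∑ t ∈ Finset.Icc 1 T, lam t * ∫ ω, u t (X t ω / B t ω) ∂μ) :
    (∀ s ∈ Finset.Icc 1 T, ∀ t ∈ Finset.Icc 1 T, s ≤ t →
      μ[(fun ω => lam t * deriv (u t) (X t ω / B t ω)) | ℱ s]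
        =ᵐ[μ] fun ω => lam s * deriv (u s) (X s ω / B s ω)) ∧
    (∀ t ∈ Finset.Icc 1 T, 0 < lam t) := by
  have hB1 := fun k (hk : k ∈ Icc 1 T) => one_le_discount hr_nonneg hB (mem_Icc.1 hk).2
  have hBmeas := fun k (hk : k ∈ Icc 1 T) =>
    measurable_discount hℱmono hr_meas hB (mem_Icc.1 hk).2
  have hBbdd := fun k (hk : k ∈ Icc 1 T) =>
    exists_discount_le hr_nonneg hr_bdd hB (mem_Icc.1 hk).2
  have hkey := fun s (hs : s ∈ Icc 1 T) t (ht : t ∈ Icc 1 T) (hst : s ≤ t) (A : Set Ω)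
      (hA : MeasurableSet[ℱ s] A) =>
    hX.mul_setIntegral_deriv_eq hℱmono hℱle hB1 hBmeas hBbdd hu_diff hXopt hs ht hst hA
  have hu' := fun k (hk : k ∈ Icc 1 T) => (hu_diff k hk).continuous_deriv le_rfl
  refine ⟨fun s hs t ht hst => ?_, fun k hk => ?_⟩
  · have hint := fun k hk => hX.integrable_comp_div hℱle hB1 hBmeas (hu' k hk) hk
    refine (ae_eq_condExp_of_forall_setIntegral_eq (hℱle s) ((hint t ht).const_mul _)
      (fun A _ _ => ((hint s hs).const_mul _).integrableOn) (fun A hA _ => ?_) ?_).symm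
    · simpa only [integral_const_mul] using hkey s hs t ht hst A hA
    · exact (((hu' s hs).measurable.comp ((hX.1 s hs).1.div (hBmeas s hs))).const_mul
        _).stronglyMeasurable.aestronglyMeasurable
  · have hE := fun k hk => hX.integral_comp_div_pos hℱle hB1 hBmeas (hu' k hk) (hu_deriv k hk) hk
    obtain ⟨j, hj, hlam_j⟩ := hlam_ne
    have heq : lam k * ∫ ω, deriv (u k) (X k ω / B k ω) ∂μ =
        lam j * ∫ ω, deriv (u j) (X j ω / B j ω) ∂μ := by
      rcases le_total k j with h | h
      · simpa using hkey k hk j hj h Set.univ MeasurableSet.univ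
      · simpa using (hkey j hj k hk h Set.univ MeasurableSet.univ).symm
    exact pos_of_mul_pos_left (heq ▸ mul_pos ((hlam_nonneg j hj).lt_of_ne' hlam_j) (hE j hj))
      (hE k hk).le

/-- Lemma 2.11: if `λ ∈ ℝ₊^T \ {0}` and `(X_t) ∈ A(W)` solves Problem `P_λ`, then
(a) `(λ_t u_t'(X̃_t))` is an `(F_t)`-martingale, and (b) every `λ_t` is positive. -/
theorem problemLambda_solution_martingale_and_pos
    {Ω : Type*} [mΩ : MeasurableSpace Ω] (μ : Measure Ω) [IsProbabilityMeasure μ]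
    (T : ℕ) (hT : 1 ≤ T)
    (ℱ : ℕ → MeasurableSpace Ω) (hℱmono : Monotone ℱ) (hℱle : ∀ t, ℱ t ≤ mΩ)
    (r : ℕ → Ω → ℝ)
    (hr_meas : ∀ t ∈ Finset.Icc 1 T, Measurable[ℱ (t - 1)] (r t))
    (hr_nonneg : ∀ t ∈ Finset.Icc 1 T, ∀ ω, 0 ≤ r t ω)
    (hr_bdd : ∀ t ∈ Finset.Icc 1 T, ∃ C : ℝ, ∀ ω, r t ω ≤ C)
    (B : ℕ → Ω → ℝ) (hB : ∀ t ω, B t ω = ∏ k ∈ Finset.Icc 1 t, (1 + r k ω))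
    (u : ℕ → ℝ → ℝ)
    (hu_conc : ∀ t ∈ Finset.Icc 1 T, StrictConcaveOn ℝ (Set.univ : Set ℝ) (u t))
    (hu_diff : ∀ t ∈ Finset.Icc 1 T, ContDiff ℝ 1 (u t))
    (hu_deriv : ∀ t ∈ Finset.Icc 1 T, ∀ x : ℝ, 0 < deriv (u t) x)
    (W : Ω → ℝ) (hWmeas : Measurable[ℱ T] W) (hWbdd : ∃ C : ℝ, ∀ᵐ ω ∂μ, |W ω| ≤ C)
    (lam : ℕ → ℝ)
    (hlam_nonneg : ∀ t ∈ Finset.Icc 1 T, 0 ≤ lam t)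
    (hlam_ne : ∃ t ∈ Finset.Icc 1 T, lam t ≠ 0)
    (X : ℕ → Ω → ℝ) (hX : IsAlloc μ T ℱ B W X)
    (hXopt : ∀ Y, IsAlloc μ T ℱ B W Y →
      ∑ t ∈ Finset.Icc 1 T, lam t * ∫ ω, u t (Y t ω / B t ω) ∂μ ≤
        ∑ t ∈ Finset.Icc 1 T, lam t * ∫ ω, u t (X t ω / B t ω) ∂μ) :
    (∀ s ∈ Finset.Icc 1 T, ∀ t ∈ Finset.Icc 1 T, s ≤ t →
      μ[(fun ω => lam t * deriv (u t) (X t ω / B t ω)) | ℱ s]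
        =ᵐ[μ] fun ω => lam s * deriv (u s) (X s ω / B s ω)) ∧
    (∀ t ∈ Finset.Icc 1 T, 0 < lam t) :=
  problemLambda_solution_martingale_and_pos_general (mΩ := mΩ) μ T ℱ hℱmono hℱle r hr_meas hr_nonneg
    hr_bdd B hB u hu_diff hu_deriv W lam hlam_nonneg hlam_ne X hX hXopt
end
end
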